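/- arXiv:1502.02074 — 6 statements merged into one kernel-verified Lean document; each statement's English description precedes it below -/
import Mathlib

section
/- If x is a point of a subset S of ℝⁿ at which S is locally an embedded C² submanifold, and y ∈ ℝⁿ satisfies {x} = proj_S(x + λz) for some λ > 0 (i.e., x is the unique nearest point of S to x + λz), then z lies in the normal space to S at x. Conversely, if z is in the normal space to S at x, then for some λ > 0, x is a local nearest point in S to x + λz. -/
open scoped RealInnerProductSpace
open Matrix
open MeasureTheory

noncomputable section

/-- The normal space to `S` at `x`: the orthogonal complement of the tangent cone. -/
def NormalAt {E : Type*} [NormedAddCommGroup E] [InnerProductSpace ℝ E]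
    (S : Set E) (x : E) : Set E :=
  {v | ∀ w ∈ tangentConeAt ℝ S x, ⟪v, w⟫ = 0}

/-- `x` is a C²-smooth point of `S`: near `x`, `S` is the regular zero set of a C² map. -/
def SmoothPt {E : Type*} [NormedAddCommGroup E] [NormedSpace ℝ E]
    (S : Set E) (x : E) : Prop :=
  x ∈ S ∧ ∃ (U : Set E) (k : ℕ) (f : E → EuclideanSpace ℝ (Fin k)),
    IsOpen U ∧ x ∈ U ∧ ContDiffOn ℝ 2 f U ∧
    (∀ z ∈ U, Function.Surjective (fderivWithin ℝ f U z)) ∧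
    S ∩ U = {z ∈ U | f z = 0}

/-- ED critical point of `y` on `S`. -/
def EDCritPt {E : Type*} [NormedAddCommGroup E] [InnerProductSpace ℝ E]
    (S : Set E) (y x : E) : Prop :=
  SmoothPt S x ∧ (y - x) ∈ NormalAt S x

/-- Metric projection of `y` onto `S`. -/
def projSet {E : Type*} [NormedAddCommGroup E] (S : Set E) (y : E) : Set E :=
  {x ∈ S | dist y x = Metric.infDist y S}

/-- Matrices viewed as Euclidean space (Frobenius norm). -/
def toEuc {n t : ℕ} (X : Matrix (Fin n) (Fin t) ℝ) : EuclideanSpace ℝ (Fin n × Fin t) :=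
  WithLp.toLp 2 (fun p => X p.1 p.2)

/-- Rectangular diagonal matrix. -/
def diagRect {n t : ℕ} (x : Fin n → ℝ) : Matrix (Fin n) (Fin t) ℝ :=
  fun i j => if (j : ℕ) = (i : ℕ) then x i else 0

/-- Singular values of a rectangular matrix, in non-increasing order. -/
def singvals {n t : ℕ} (X : Matrix (Fin n) (Fin t) ℝ) : EuclideanSpace ℝ (Fin n) :=
  let g : Fin n → ℝ := fun j =>
    Real.sqrt ((Matrix.isHermitian_mul_conjTranspose_self X).eigenvalues j)
  WithLp.toLp 2 (fun i => g (Tuple.sort (fun j => -g j) i))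

/-- A vector of signs. -/
def IsSignFn {n : ℕ} (ε : Fin n → ℝ) : Prop := ∀ i, ε i = 1 ∨ ε i = -1

/-- Absolutely symmetric set: invariant under all signed permutations of coordinates. -/
def AbsSymm {n : ℕ} (S : Set (EuclideanSpace ℝ (Fin n))) : Prop :=
  ∀ (π : Equiv.Perm (Fin n)) (ε : Fin n → ℝ), IsSignFn ε →
    ∀ x : EuclideanSpace ℝ (Fin n), x ∈ S ↔ (WithLp.toLp 2 (fun i => ε i * x (π i)) : EuclideanSpace ℝ (Fin n)) ∈ S

/-- Orthogonally invariant set of matrices. -/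
def OrthInv {n t : ℕ} (M : Set (Matrix (Fin n) (Fin t) ℝ)) : Prop :=
  ∀ (U : Matrix (Fin n) (Fin n) ℝ) (V : Matrix (Fin t) (Fin t) ℝ),
    U * Uᵀ = 1 → V * Vᵀ = 1 → (fun X => U * X * Vᵀ) '' M = M

/-- Projection onto a set of matrices in Frobenius norm. -/
def matProj {n t : ℕ} (A : Set (Matrix (Fin n) (Fin t) ℝ)) (Y : Matrix (Fin n) (Fin t) ℝ) :
    Set (Matrix (Fin n) (Fin t) ℝ) :=
  {X ∈ A | dist (toEuc Y) (toEuc X) = Metric.infDist (toEuc Y) (toEuc '' A)}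

/-- ED critical point in matrix space (with Frobenius inner product). -/
def MatEDCritPt {n t : ℕ} (M : Set (Matrix (Fin n) (Fin t) ℝ))
    (Y X : Matrix (Fin n) (Fin t) ℝ) : Prop :=
  EDCritPt (toEuc '' M) (toEuc Y) (toEuc X)

/-! Near a C² smooth point, `S` is a regular fibre `f ⁻¹' {f x}` with `Df(x)` surjective. By the
implicit function theorem every `w ∈ ker Df(x)` is the velocity of a curve in `S` through `x`, so
the tangent cone is `ker Df(x)` and the normal space is its orthogonal complement. If `x` is
nearest to `y`, the squared distance to `y` along such a curve is minimal at `x`, whence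
`⟪y - x, w⟫ = 0`. Conversely, if `z ⊥ ker Df(x)` then `z = Df(x)† μ`, and for `w ∈ S` near `x`
Taylor's formula gives `⟪z, w - x⟫ = -⟪μ, f w - f x - Df(x)(w - x)⟫ = O(‖w - x‖²)`. Since
`‖x + λ z - w‖² - ‖λ z‖² = ‖w - x‖² - 2 λ ⟪z, w - x⟫`, a small `λ > 0` makes `x` locally nearest. -/

open Filter Topology Set

section TangentCone

variable {E F : Type*} [NormedAddCommGroup E] [NormedSpace ℝ E]
  [NormedAddCommGroup F] [NormedSpace ℝ F] {f : E → F} {f' : E →L[ℝ] F} {S : Set E} {x : E}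

theorem mem_tangentConeAt_of_hasDerivAt {w : E} {γ : ℝ → E} (hγ₀ : γ 0 = x)
    (hγ : HasDerivAt γ w 0) (hγS : ∀ᶠ t in 𝓝 0, γ t ∈ S) : w ∈ tangentConeAt ℝ S x := by
  have hmaps := (hγ.hasFDerivAt.hasFDerivWithinAt (s := {t | γ t ∈ S})).mapsTo_tangent_cone
    (by rw [tangentConeAt_of_mem_nhds hγS]; exact mem_univ (1 : ℝ))
  rw [hγ₀] at hmaps
  simpa using tangentConeAt_mono (image_subset_iff.mpr fun _ ht => ht) hmaps

theorem tangentConeAt_subset_ker (hf : HasFDerivAt f f' x) (hS : S ≤ᶠ[𝓝 x] f ⁻¹' {f x}) :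
    tangentConeAt ℝ S x ⊆ f'.ker := by
  intro w hw
  have hV : {u | u ∈ S → f u = f x} ∈ 𝓝 x := hS
  have hmaps := (hf.hasFDerivWithinAt (s := S ∩ {u | u ∈ S → f u = f x})).mapsTo_tangent_cone
    (by rwa [tangentConeAt_inter_nhds hV])
  have himage : f '' (S ∩ {u | u ∈ S → f u = f x}) ⊆ {f x} := by
    rintro _ ⟨u, hu, rfl⟩
    exact hu.2 hu.1
  have hzero := tangentConeAt_subset_zero (𝕜 := ℝ) (s := ({f x} : Set F))
    (by rw [accPt_iff_frequently]; simp) (tangentConeAt_mono himage hmaps)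
  simpa using hzero

variable [CompleteSpace E] [FiniteDimensional ℝ F]

theorem HasStrictFDerivAt.exists_curve_in_fiber (hf : HasStrictFDerivAt f f' x)
    (hf' : f'.range = ⊤) {w : E} (hw : w ∈ f'.ker) :
    ∃ γ : ℝ → E, γ 0 = x ∧ HasDerivAt γ w 0 ∧ ∀ᶠ t in 𝓝 0, f (γ t) = f x := by
  let ψ := hf.implicitFunction f f' hf' (f x)
  let v : f'.ker := ⟨w, hw⟩
  refine ⟨fun t => ψ (t • v), by simp [ψ], ?_, ?_⟩
  · have hψ : HasFDerivAt ψ f'.ker.subtypeL ((0 : ℝ) • v) := by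
      rw [zero_smul]; exact (hf.to_implicitFunction hf').hasFDerivAt
    exact (hψ.comp_hasDerivAt (0 : ℝ) ((hasDerivAt_id' (0 : ℝ)).smul_const v)).congr_deriv
      (by simp [v])
  · have hlim : Tendsto (fun t : ℝ => (f x, t • v)) (𝓝 0) (𝓝 (f x, 0)) :=
      (by fun_prop : Continuous fun t : ℝ => (f x, t • v)).tendsto' 0 _ (by simp)
    exact hlim.eventually (hf.map_implicitFunction_eq hf')

theorem HasStrictFDerivAt.exists_curve_mem_of_mem_ker (hf : HasStrictFDerivAt f f' x)
    (hf' : f'.range = ⊤) (hS : f ⁻¹' {f x} ≤ᶠ[𝓝 x] S) {w : E} (hw : w ∈ f'.ker) :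
    ∃ γ : ℝ → E, γ 0 = x ∧ HasDerivAt γ w 0 ∧ ∀ᶠ t in 𝓝 0, γ t ∈ S := by
  obtain ⟨γ, hγ₀, hγ, hfγ⟩ := hf.exists_curve_in_fiber hf' hw
  have hγx : Tendsto γ (𝓝 0) (𝓝 x) := hγ₀ ▸ hγ.continuousAt.tendsto
  refine ⟨γ, hγ₀, hγ, ?_⟩
  filter_upwards [hfγ, hγx.eventually hS] with t ht htS using htS ht

theorem HasStrictFDerivAt.tangentConeAt_eq_ker (hf : HasStrictFDerivAt f f' x)
    (hf' : f'.range = ⊤) (hS : S =ᶠ[𝓝 x] f ⁻¹' {f x}) :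
    tangentConeAt ℝ S x = f'.ker := by
  refine (tangentConeAt_subset_ker hf.hasFDerivAt hS.le).antisymm fun w hw => ?_
  obtain ⟨γ, hγ₀, hγ, hγS⟩ := hf.exists_curve_mem_of_mem_ker hf' hS.symm.le hw
  exact mem_tangentConeAt_of_hasDerivAt hγ₀ hγ hγS

end TangentCone

section InnerProduct

variable {E F : Type*} [NormedAddCommGroup E] [InnerProductSpace ℝ E]
  [NormedAddCommGroup F] [NormedSpace ℝ F] {f : E → F} {f' : E →L[ℝ] F}
  {S : Set E} {x y : E}

theorem inner_sub_eq_zero_of_mem_projSet (hx : x ∈ projSet S y) {γ : ℝ → E} {w : E}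
    (hγ₀ : γ 0 = x) (hγ : HasDerivAt γ w 0) (hγS : ∀ᶠ t in 𝓝 0, γ t ∈ S) :
    ⟪y - x, w⟫ = 0 := by
  have hmin : IsLocalMin (fun t => ‖γ t - y‖ ^ 2) 0 := by
    filter_upwards [hγS] with t ht
    have := hx.2 ▸ Metric.infDist_le_dist_of_mem (x := y) ht
    rw [hγ₀, ← dist_eq_norm', ← dist_eq_norm']
    gcongr
  have := hmin.hasDerivAt_eq_zero ((hγ.sub_const y).norm_sq)
  rw [hγ₀, ← neg_sub, inner_neg_left] at this
  linarith

variable [CompleteSpace E] [FiniteDimensional ℝ F]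

theorem HasStrictFDerivAt.normalAt_eq_orthogonal_ker (hf : HasStrictFDerivAt f f' x)
    (hf' : f'.range = ⊤) (hS : S =ᶠ[𝓝 x] f ⁻¹' {f x}) :
    NormalAt S x = (f'.kerᗮ : Set E) := by
  ext v
  simp only [NormalAt, hf.tangentConeAt_eq_ker hf' hS, SetLike.mem_coe,
    Submodule.mem_orthogonal', mem_ofPred_eq]

theorem HasStrictFDerivAt.sub_mem_orthogonal_ker_of_mem_projSet (hf : HasStrictFDerivAt f f' x)
    (hf' : f'.range = ⊤) (hS : f ⁻¹' {f x} ≤ᶠ[𝓝 x] S) (hx : x ∈ projSet S y) :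
    y - x ∈ f'.kerᗮ := by
  refine (Submodule.mem_orthogonal' _ _).mpr fun w hw => ?_
  obtain ⟨γ, hγ₀, hγ, hγS⟩ := hf.exists_curve_mem_of_mem_ker hf' hS hw
  exact inner_sub_eq_zero_of_mem_projSet hx hγ₀ hγ hγS

end InnerProduct

section Taylor

variable {E F : Type*} [NormedAddCommGroup E] [NormedSpace ℝ E]
  [NormedAddCommGroup F] [NormedSpace ℝ F] {f : E → F} {x : E}

theorem ContDiffAt.isBigO_sub_sub_fderiv (hf : ContDiffAt ℝ 2 f x) :
    (fun w => f w - f x - fderiv ℝ f x (w - x)) =O[𝓝 x] fun w => ‖w - x‖ ^ 2 := by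
  obtain ⟨K, t, ht, hlip⟩ := (hf.fderiv_right (m := 1) (by norm_num)).exists_lipschitzOnWith
  have hdiff : ∀ᶠ u in 𝓝 x, DifferentiableAt ℝ f u :=
    (hf.eventually (by simp)).mono fun u hu => hu.differentiableAt two_ne_zero
  obtain ⟨r, hr, hball⟩ := Metric.mem_nhds_iff.mp (inter_mem ht hdiff)
  refine Asymptotics.IsBigO.of_bound K ?_
  filter_upwards [Metric.ball_mem_nhds x hr] with w hw
  have hseg : segment ℝ x w ⊆ Metric.ball x r :=
    (convex_ball x r).segment_subset (Metric.mem_ball_self hr) hw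
  have hderiv :
      ∀ u ∈ segment ℝ x w, ‖fderiv ℝ f u - fderiv ℝ f x‖ ≤ K * ‖w - x‖ := by
    intro u hu
    calc ‖fderiv ℝ f u - fderiv ℝ f x‖ ≤ K * ‖u - x‖ := by
          simpa [dist_eq_norm] using
            hlip.dist_le_mul u (hball (hseg hu)).1 x (hball (Metric.mem_ball_self hr)).1
      _ ≤ K * ‖w - x‖ := by
          gcongr
          simpa [dist_eq_norm, norm_sub_rev] using segment_subset_closedBall_left x w hu
  have hmvt := (convex_segment x w).norm_image_sub_le_of_norm_hasFDerivWithin_le'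
    (fun u hu => ((hball (hseg hu)).2 : DifferentiableAt ℝ f u).hasFDerivAt.hasFDerivWithinAt)
    hderiv (left_mem_segment ℝ x w) (right_mem_segment ℝ x w)
  simpa [sq, mul_assoc] using hmvt

end Taylor

section Projection

variable {E : Type*} [NormedAddCommGroup E] [InnerProductSpace ℝ E]

theorem dist_add_smul_le_dist_iff (x z w : E) (lam : ℝ) :
    dist (x + lam • z) x ≤ dist (x + lam • z) w ↔
      2 * lam * ⟪z, w - x⟫ ≤ ‖w - x‖ ^ 2 := by
  have hw : x + lam • z - w = lam • z - (w - x) := by abel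
  rw [dist_eq_norm, dist_eq_norm, add_sub_cancel_left, hw, ← sq_le_sq₀ (norm_nonneg _)
    (norm_nonneg _), norm_sub_sq_real, real_inner_smul_left]
  constructor <;> intro h <;> linarith

theorem exists_local_nearest_of_inner_le_mul_norm_sq {S : Set E} {x z : E} {C : ℝ}
    (hC : ∀ᶠ w in 𝓝 x, w ∈ S → ⟪z, w - x⟫ ≤ C * ‖w - x‖ ^ 2) :
    ∃ lam : ℝ, 0 < lam ∧ ∃ U ∈ 𝓝 x,
      ∀ w ∈ S ∩ U, dist (x + lam • z) x ≤ dist (x + lam • z) w := by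
  set D := max C 1
  have hD : 0 < D := lt_max_of_lt_right one_pos
  refine ⟨(2 * D)⁻¹, by positivity, _, hC, fun w ⟨hwS, hw⟩ => ?_⟩
  have hlam : 2 * (2 * D)⁻¹ = D⁻¹ := by field_simp
  rw [dist_add_smul_le_dist_iff, hlam, inv_mul_le_iff₀ hD]
  exact (hw hwS).trans (by gcongr; exact le_max_left C 1)

end Projection

section Normal

variable {E F : Type*} [NormedAddCommGroup E] [InnerProductSpace ℝ E] [FiniteDimensional ℝ E]
  [NormedAddCommGroup F] [InnerProductSpace ℝ F] [FiniteDimensional ℝ F]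

theorem exists_inner_le_mul_norm_apply_of_mem_orthogonal_ker {f' : E →L[ℝ] F} {z : E}
    (hz : z ∈ f'.kerᗮ) : ∃ C, 0 ≤ C ∧ ∀ v, ⟪z, v⟫ ≤ C * ‖f' v‖ := by
  rw [LinearMap.orthogonal_ker] at hz
  obtain ⟨μ, rfl⟩ := hz
  refine ⟨‖μ‖, norm_nonneg μ, fun v => ?_⟩
  rw [LinearMap.adjoint_inner_left]
  exact real_inner_le_norm μ (f' v)

theorem ContDiffAt.exists_inner_le_mul_norm_sq {f : E → F} {x z : E} (hf : ContDiffAt ℝ 2 f x)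
    (hz : z ∈ (fderiv ℝ f x).kerᗮ) :
    ∃ C, ∀ᶠ w in 𝓝 x, f w = f x → ⟪z, w - x⟫ ≤ C * ‖w - x‖ ^ 2 := by
  obtain ⟨C, hC₀, hC⟩ := exists_inner_le_mul_norm_apply_of_mem_orthogonal_ker hz
  obtain ⟨K, hK⟩ := hf.isBigO_sub_sub_fderiv.bound
  refine ⟨C * K, ?_⟩
  filter_upwards [hK] with w hw hfw
  calc ⟪z, w - x⟫ ≤ C * ‖fderiv ℝ f x (w - x)‖ := hC (w - x)
    _ = C * ‖f w - f x - fderiv ℝ f x (w - x)‖ := by rw [hfw, sub_self, zero_sub, norm_neg]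
    _ ≤ C * (K * ‖‖w - x‖ ^ 2‖) := by gcongr
    _ = C * K * ‖w - x‖ ^ 2 := by rw [norm_pow, norm_norm, mul_assoc]

end Normal

theorem SmoothPt.exists_regular_fiber {E : Type*} [NormedAddCommGroup E] [NormedSpace ℝ E]
    {S : Set E} {x : E} (hx : SmoothPt S x) :
    ∃ (k : ℕ) (f : E → EuclideanSpace ℝ (Fin k)), ContDiffAt ℝ 2 f x ∧
      (fderiv ℝ f x).range = ⊤ ∧ S =ᶠ[𝓝 x] f ⁻¹' {f x} := by
  obtain ⟨hxS, U, k, f, hU, hxU, hf, hsurj, hSU⟩ := hx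
  have hfx : f x = 0 := (hSU ▸ ⟨hxS, hxU⟩ : x ∈ {z ∈ U | f z = 0}).2
  refine ⟨k, f, hf.contDiffAt (hU.mem_nhds hxU), ?_, ?_⟩
  · rw [LinearMap.range_eq_top, ← fderivWithin_of_isOpen hU hxU]
    exact hsurj x hxU
  · filter_upwards [hU.mem_nhds hxU] with u hu
    have hmem : u ∈ S ∩ U ↔ u ∈ {z ∈ U | f z = 0} := by rw [hSU]
    refine propext ?_
    change u ∈ S ↔ f u = f x
    simpa [hu, hfx] using hmem

/-- at a C²-smooth point `x` of `S`, a vector `z` is normal to `S` at `x`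
iff (⇐ for some λ>0, globally) `x` is the unique nearest point of `S` to `x + λz`, and
(⇒) for some λ>0, `x` is a local nearest point of `S` to `x + λz`. -/
theorem ed_crit_normal_char {n : ℕ} (S : Set (EuclideanSpace ℝ (Fin n)))
    (x z : EuclideanSpace ℝ (Fin n)) (hx : SmoothPt S x) :
    ((∃ lam : ℝ, 0 < lam ∧ projSet S (x + lam • z) = {x}) → z ∈ NormalAt S x) ∧
    (z ∈ NormalAt S x → ∃ lam : ℝ, 0 < lam ∧ ∃ U ∈ nhds x,
      ∀ w ∈ S ∩ U, dist (x + lam • z) x ≤ dist (x + lam • z) w) := by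
  obtain ⟨k, f, hf, hsurj, hS⟩ := hx.exists_regular_fiber
  have hstrict := hf.hasStrictFDerivAt two_ne_zero
  rw [hstrict.normalAt_eq_orthogonal_ker hsurj hS]
  refine ⟨fun ⟨lam, hlam, hproj⟩ => ?_, fun hz => ?_⟩
  · have hnearest : x ∈ projSet S (x + lam • z) := hproj ▸ rfl
    have hlamz := hstrict.sub_mem_orthogonal_ker_of_mem_projSet hsurj hS.symm.le hnearest
    rw [add_sub_cancel_left] at hlamz
    simpa [hlam.ne'] using Submodule.smul_mem _ lam⁻¹ hlamz
  · obtain ⟨C, hC⟩ := hf.exists_inner_le_mul_norm_sq hz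
    refine exists_local_nearest_of_inner_le_mul_norm_sq (C := C) ?_
    filter_upwards [hC, hS.le] with w hw hwS using fun h => hw (hwS h)
end
end

section
/- Let {S_i}_{i∈I} be a finite, minimally defined collection of affine subspaces of ℝⁿ and U = ⋃_{i∈I} S_i. Then there is a Lebesgue-null set Z ⊆ ℝⁿ (in fact a finite union of proper affine subspaces) such that for every y ∉ Z, the number of ED critical points of y on U equals |I|. -/
open scoped RealInnerProductSpace
open Matrix
open MeasureTheory

noncomputable section

/-! Near a point of `S i` that lies on no other `S j`, the union coincides with `S i`, so such a
point is a smooth point of the union and it is ED critical for `y` exactly when it is the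
orthogonal projection of `y` onto `S i`; conversely every ED critical point is such a projection.
The exceptional set is the union of the preimages of `S j` under the projection onto `S i`,
`i ≠ j`: by minimality these are proper affine subspaces, and off them the `|I|` projections of
`y` are distinct and each lies on a single `S i`. -/

open EuclideanGeometry Topology Set

namespace AffineSubspace

variable {E : Type*} [NormedAddCommGroup E] [NormedSpace ℝ E] {T : AffineSubspace ℝ E} {x : E}

theorem direction_subset_tangentConeAt (hx : x ∈ T) :
    (T.direction : Set E) ⊆ tangentConeAt ℝ T x := by
  intro w hw
  have hseg : openSegment ℝ x (x + w) ⊆ T := by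
    rw [openSegment_eq_image']
    rintro _ ⟨θ, -, rfl⟩
    simpa [vadd_eq_add, add_comm] using
      vadd_mem_of_mem_direction (T.direction.smul_mem θ hw) hx
  simpa using mem_tangentConeAt_of_openSegment_subset hseg

theorem tangentConeAt_subset_direction [FiniteDimensional ℝ E] (hx : x ∈ T) :
    tangentConeAt ℝ T x ⊆ T.direction := by
  intro w hw
  obtain ⟨_, _, _, c, d, -, hd, hcd⟩ := exists_fun_of_mem_tangentConeAt hw
  refine T.direction.closed_of_finiteDimensional.mem_of_tendsto hcd ?_
  filter_upwards [hd] with a ha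
  refine T.direction.smul_mem _ ?_
  rw [← vadd_mem_iff_mem_direction _ hx]
  simpa [vadd_eq_add, add_comm] using ha

theorem tangentConeAt_eq_direction [FiniteDimensional ℝ E] (hx : x ∈ T) :
    tangentConeAt ℝ T x = T.direction :=
  (tangentConeAt_subset_direction hx).antisymm (direction_subset_tangentConeAt hx)

end AffineSubspace

section InnerProductSpace

variable {E : Type*} [NormedAddCommGroup E] [InnerProductSpace ℝ E] [FiniteDimensional ℝ E]

theorem Submodule.exists_surjective_euclideanSpace_eq_zero_iff (K : Submodule ℝ E) :
    ∃ (k : ℕ) (L : E →L[ℝ] EuclideanSpace ℝ (Fin k)),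
      Function.Surjective L ∧ ∀ v, L v = 0 ↔ v ∈ K := by
  let W := Kᗮ
  refine ⟨_, (stdOrthonormalBasis ℝ W).repr.toContinuousLinearMap.comp
    W.orthogonalProjectionOnto, ?_, fun v => ?_⟩
  · refine (stdOrthonormalBasis ℝ W).repr.surjective.comp fun w => ⟨w, ?_⟩
    exact W.orthogonalProjectionOnto_mem_subspace_eq_self w
  · change (stdOrthonormalBasis ℝ W).repr (W.orthogonalProjectionOnto v) = 0 ↔ v ∈ K
    rw [LinearIsometryEquiv.map_eq_zero_iff, Submodule.orthogonalProjectionOnto_eq_zero_iff,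
      K.orthogonal_orthogonal]

variable {A V : Set E} {T : AffineSubspace ℝ E} {x : E}

theorem smoothPt_of_inter_eq (hV : IsOpen V) (hxV : x ∈ V) (hx : x ∈ T)
    (hAV : A ∩ V = (T : Set E) ∩ V) : SmoothPt A x := by
  obtain ⟨k, L, hL, hLzero⟩ := T.direction.exists_surjective_euclideanSpace_eq_zero_iff
  have hxA : x ∈ A := (hAV.symm ▸ ⟨hx, hxV⟩ : x ∈ A ∩ V).1
  refine ⟨hxA, V, k, fun z => L z - L x, hV, hxV, (L.contDiff.sub contDiff_const).contDiffOn,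
    fun z hz => ?_, ?_⟩
  · rwa [fderivWithin_of_isOpen hV hz, (L.hasFDerivAt.sub_const (L x)).fderiv]
  · ext z
    change z ∈ A ∩ V ↔ z ∈ V ∧ L z - L x = 0
    rw [hAV, ← map_sub, hLzero, ← vsub_eq_sub,
      AffineSubspace.vsub_right_mem_direction_iff_mem hx z]
    exact and_comm

theorem normalAt_eq_orthogonal_direction (hV : V ∈ 𝓝 x) (hx : x ∈ T)
    (hAV : A ∩ V = (T : Set E) ∩ V) :
    NormalAt A x = T.directionᗮ := by
  have htan : tangentConeAt ℝ A x = T.direction := by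
    rw [← tangentConeAt_inter_nhds hV, hAV, tangentConeAt_inter_nhds hV,
      T.tangentConeAt_eq_direction hx]
  ext v
  simp [NormalAt, htan, Submodule.mem_orthogonal']

theorem edCritPt_iff_of_inter_eq [Nonempty T] (hV : IsOpen V) (hxV : x ∈ V) (hx : x ∈ T)
    (hAV : A ∩ V = (T : Set E) ∩ V) (y : E) :
    EDCritPt A y x ↔ (orthogonalProjection T y : E) = x := by
  rw [EDCritPt, coe_orthogonalProjection_eq_iff_mem,
    normalAt_eq_orthogonal_direction (hV.mem_nhds hxV) hx hAV]
  simp [smoothPt_of_inter_eq hV hxV hx hAV, hx]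

end InnerProductSpace

theorem iUnion_inter_compl_biUnion_ne {α ι : Type*} (s : ι → Set α) (i : ι) :
    (⋃ j, s j) ∩ (⋃ j ≠ i, s j)ᶜ = s i ∩ (⋃ j ≠ i, s j)ᶜ := by
  ext z
  simp only [mem_inter_iff, mem_iUnion, mem_compl_iff, not_exists]
  constructor
  · rintro ⟨⟨j, hj⟩, hz⟩
    obtain rfl : j = i := by_contra fun hji => hz j hji hj
    exact ⟨hj, hz⟩
  · rintro ⟨hi, hz⟩
    exact ⟨⟨i, hi⟩, hz⟩

section AffineComplex

variable {E : Type*} [NormedAddCommGroup E] [InnerProductSpace ℝ E] [FiniteDimensional ℝ E]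
  {ι : Type*} {S : ι → AffineSubspace ℝ E} [∀ i, Nonempty (S i)] {x y : E}

theorem EDCritPt.exists_coe_orthogonalProjection_eq (h : EDCritPt (⋃ i, (S i : Set E)) y x) :
    ∃ i, (orthogonalProjection (S i) y : E) = x := by
  obtain ⟨i, hxi⟩ := mem_iUnion.mp h.1.1
  refine ⟨i, coe_orthogonalProjection_eq_iff_mem.mpr ⟨hxi, ?_⟩⟩
  rw [Submodule.mem_orthogonal']
  exact fun u hu => h.2 u <|
    tangentConeAt_mono (subset_iUnion _ i) ((S i).direction_subset_tangentConeAt hxi hu)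

theorem edCritPt_iUnion_iff_of_notMem [Finite ι] {i : ι} (hxi : x ∈ S i)
    (hxj : ∀ j ≠ i, x ∉ S j) :
    EDCritPt (⋃ j, (S j : Set E)) y x ↔ (orthogonalProjection (S i) y : E) = x := by
  refine edCritPt_iff_of_inter_eq ?_ ?_ hxi (iUnion_inter_compl_biUnion_ne _ i) y
  · exact ((toFinite _).isClosed_biUnion fun j _ =>
      (S j).closed_of_finiteDimensional).isOpen_compl
  · simpa using hxj

theorem setOf_edCritPt_iUnion_eq_range [Finite ι]
    (hy : ∀ i j, i ≠ j → (orthogonalProjection (S i) y : E) ∉ S j) :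
    {x | EDCritPt (⋃ i, (S i : Set E)) y x} =
      range fun i => (orthogonalProjection (S i) y : E) := by
  ext x
  refine ⟨EDCritPt.exists_coe_orthogonalProjection_eq, ?_⟩
  rintro ⟨i, rfl⟩
  exact (edCritPt_iUnion_iff_of_notMem (orthogonalProjection_mem y)
    fun j hji => hy i j hji.symm).mpr rfl

end AffineComplex

theorem addHaar_preimage_orthogonalProjection_eq_zero {E : Type*} [NormedAddCommGroup E]
    [InnerProductSpace ℝ E] [FiniteDimensional ℝ E] [MeasurableSpace E] [BorelSpace E]
    (μ : Measure E) [μ.IsAddHaarMeasure] {s t : AffineSubspace ℝ E} [Nonempty s]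
    (hst : ¬ (s : Set E) ⊆ t) :
    μ ((fun y => (orthogonalProjection s y : E)) ⁻¹' t) = 0 := by
  let π : E →ᵃ[ℝ] E := s.subtype.comp (orthogonalProjection s).toAffineMap
  refine Measure.addHaar_affineSubspace μ (t.comap π) fun htop => hst fun z hz => ?_
  have hπz : π z ∈ t := (htop ▸ AffineSubspace.mem_top ℝ E z : z ∈ t.comap π)
  rwa [show π z = z from orthogonalProjection_eq_self_iff.mpr hz] at hπz

/-- for a finite minimally defined collection of affine subspaces with union `U`,
there is a Lebesgue-null set `Z` such that every `y ∉ Z` has exactly `|I|` ED critical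
points on `U`. -/
theorem card_crit_points_affine_complex {n : ℕ} {ι : Type} [Fintype ι]
    (S : ι → AffineSubspace ℝ (EuclideanSpace ℝ (Fin n)))
    (hne : ∀ i, (S i : Set (EuclideanSpace ℝ (Fin n))).Nonempty)
    (hmin : ∀ i j, i ≠ j →
      ¬ ((S i : Set (EuclideanSpace ℝ (Fin n))) ⊆ (S j : Set (EuclideanSpace ℝ (Fin n))))) :
    ∃ Z : Set (EuclideanSpace ℝ (Fin n)), MeasureTheory.volume Z = 0 ∧
      ∀ y ∉ Z,
        {x | EDCritPt (⋃ i, (S i : Set (EuclideanSpace ℝ (Fin n)))) y x}.ncard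
          = Fintype.card ι := by
  have : ∀ i, Nonempty (S i) := fun i => (hne i).to_subtype
  let π : ι → EuclideanSpace ℝ (Fin n) → EuclideanSpace ℝ (Fin n) :=
    fun i y => orthogonalProjection (S i) y
  refine ⟨⋃ (i) (j) (_ : i ≠ j), π i ⁻¹' S j, ?_, fun y hy => ?_⟩
  · exact measure_iUnion_null fun i => measure_iUnion_null fun j => measure_iUnion_null fun hij =>
        addHaar_preimage_orthogonalProjection_eq_zero _ (hmin i j hij)
  · simp only [mem_iUnion, mem_preimage, not_exists] at hy
    have hinj : Function.Injective fun i => π i y := fun i j (hπ : π i y = π j y) =>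
      by_contra fun hij => hy i j hij (hπ ▸ orthogonalProjection_mem y)
    rw [setOf_edCritPt_iUnion_eq_range hy, ncard_range_of_injective hinj,
      Nat.card_eq_fintype_card]
end
end

section
/- For any y in ℝⁿ and a finite minimally defined collection of affine subspaces {S_i}_{i∈I} with union U, the set of ED critical points of y on U equals the disjoint union over i ∈ I of (proj_{S_i}(y) ∩ U*), where U* is the set of smooth points of U. -/
open scoped RealInnerProductSpace
open Matrix
open MeasureTheory

noncomputable section

/-!
Near a smooth point `x` the union `U` is the regular level set of a submersion, so by the implicit
function theorem its tangent cone at `x` is a linear subspace. On the other hand, the tangent cone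
of `U` at `x` is the union of the directions of the pieces through `x`. A subspace covered by
finitely many subspaces lies in one of them, and minimality then leaves exactly one piece `S i`
through `x`, whose direction is the tangent cone. Hence the normal space at `x` is the orthogonal
complement of that direction, and this orthogonality characterizes `x = proj_{S i}(y)`.
-/

open Filter Set Topology

theorem tangentConeAt_iUnion {R E ι : Type*} [AddCommGroup E] [SMul R E] [TopologicalSpace E]
    [Finite ι] (s : ι → Set E) (x : E) :
    tangentConeAt R (⋃ i, s i) x = ⋃ i, tangentConeAt R (s i) x := by
  refine Subset.antisymm (fun v hv => ?_)
    (iUnion_subset fun i => tangentConeAt_mono (subset_iUnion s i))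
  obtain ⟨α, l, _, c, d, hd₀, hds, hcd⟩ := exists_fun_of_mem_tangentConeAt hv
  obtain ⟨i, hi⟩ : ∃ i, ∃ᶠ n in l, x + d n ∈ s i :=
    frequently_exists.1 (hds.frequently.mono fun n hn => mem_iUnion.1 hn)
  exact mem_iUnion.2 ⟨i, mem_tangentConeAt_of_frequently l c d hd₀ hi hcd⟩

theorem Submodule.exists_le_of_subset_iUnion {K V ι : Type*} [Field K] [Infinite K]
    [AddCommGroup V] [Module K V] [Finite ι] {p : Submodule K V} {q : ι → Submodule K V}
    (h : (p : Set V) ⊆ ⋃ i, (q i : Set V)) : ∃ i, p ≤ q i := by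
  obtain ⟨i, hi⟩ := Subspace.exists_eq_top_of_iUnion_eq_univ (p := fun i => (q i).comap p.subtype)
    (eq_univ_of_forall fun v => by simpa using h v.2)
  exact ⟨i, fun v hv => (Submodule.eq_top_iff'.1 hi ⟨v, hv⟩ : _)⟩

section LevelSet

variable {𝕜 E F : Type*} [NontriviallyNormedField 𝕜] [CompleteSpace 𝕜]
  [NormedAddCommGroup E] [NormedSpace 𝕜 E] [CompleteSpace E]
  [NormedAddCommGroup F] [NormedSpace 𝕜 F] [FiniteDimensional 𝕜 F]

/-- The inclusion of `ker f'` in the tangent cone: by the implicit function theorem the level set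
contains the image of a neighbourhood of `0` in `ker f'` under a map whose derivative at `0` is
the inclusion. -/
theorem HasStrictFDerivAt.tangentConeAt_preimage_singleton_eq_ker {f : E → F} {f' : E →L[𝕜] F}
    {x : E} (hf : HasStrictFDerivAt f f' x) (hf' : f'.range = ⊤) :
    tangentConeAt 𝕜 (f ⁻¹' {f x}) x = f'.ker := by
  refine Subset.antisymm (fun v hv => ?_) (fun v hv => ?_)
  · have hconst : HasFDerivWithinAt f (0 : E →L[𝕜] F) (f ⁻¹' {f x}) x :=
      (hasFDerivWithinAt_const (f x) x _).congr_of_eventuallyEq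
        (eventually_mem_nhdsWithin.mono fun z hz => hz) rfl
    exact hf.hasFDerivAt.hasFDerivWithinAt.unique_on hconst hv
  · set g := hf.implicitFunction f f' hf' (f x)
    have hg : HasStrictFDerivAt g f'.ker.subtypeL 0 := hf.to_implicitFunction hf'
    have hfg : {z | f (g z) = f x} ∈ 𝓝 0 :=
      (tendsto_const_nhds.prodMk_nhds tendsto_id).eventually (hf.map_implicitFunction_eq hf')
    have hv' : (⟨v, hv⟩ : f'.ker) ∈ tangentConeAt 𝕜 {z | f (g z) = f x} 0 := by
      rw [tangentConeAt_of_mem_nhds hfg]; trivial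
    have hcone := hg.hasFDerivAt.hasFDerivWithinAt.mapsTo_tangent_cone hv'
    rw [show g 0 = x from hf.implicitFunction_apply_image hf'] at hcone
    exact tangentConeAt_mono (image_subset_iff.2 fun z hz => hz) hcone

end LevelSet

theorem SmoothPt.exists_tangentConeAt_eq_submodule {E : Type*} [NormedAddCommGroup E]
    [NormedSpace ℝ E] [CompleteSpace E] {S : Set E} {x : E} (h : SmoothPt S x) :
    ∃ K : Submodule ℝ E, tangentConeAt ℝ S x = K := by
  obtain ⟨hxS, W, k, f, hW, hxW, hf, hsurj, hSW⟩ := h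
  have hfx : f x = 0 := (hSW.subset ⟨hxS, hxW⟩).2
  have hstrict : HasStrictFDerivAt f (fderiv ℝ f x) x :=
    (hf.contDiffAt (hW.mem_nhds hxW)).hasStrictFDerivAt (by norm_num)
  have hrange : (fderiv ℝ f x).range = ⊤ := by
    rw [LinearMap.range_eq_top, ← fderivWithin_of_isOpen hW hxW]
    exact hsurj x hxW
  have hSW' : S ∩ W = f ⁻¹' {f x} ∩ W := by
    rw [hSW, hfx]
    ext z
    simp [and_comm]
  refine ⟨(fderiv ℝ f x).ker, ?_⟩
  rw [← tangentConeAt_inter_nhds (hW.mem_nhds hxW), hSW',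
    tangentConeAt_inter_nhds (hW.mem_nhds hxW), hstrict.tangentConeAt_preimage_singleton_eq_ker hrange]

theorem AffineSubspace.le_of_direction_le_of_mem {k V P : Type*} [Ring k] [AddCommGroup V]
    [Module k V] [AddTorsor V P] {s t : AffineSubspace k P} {x : P} (hxs : x ∈ s) (hxt : x ∈ t)
    (h : s.direction ≤ t.direction) : s ≤ t := fun z hz => by
  simpa using AffineSubspace.vadd_mem_of_mem_direction
    (h (AffineSubspace.vsub_mem_direction hz hxs)) hxt

namespace AffineSubspace

variable {E : Type*} [NormedAddCommGroup E] [NormedSpace ℝ E] [FiniteDimensional ℝ E]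

theorem tangentConeAt_eq_direction_s3 (s : AffineSubspace ℝ E) {x : E} (hx : x ∈ s) :
    tangentConeAt ℝ (s : Set E) x = s.direction := by
  refine Subset.antisymm (fun v hv => ?_) (fun v hv => ?_)
  · obtain ⟨α, l, _, c, d, -, hds, hcd⟩ := exists_fun_of_mem_tangentConeAt hv
    refine s.direction.closed_of_finiteDimensional.mem_of_tendsto hcd (hds.mono fun n hn => ?_)
    exact s.direction.smul_mem _ (by simpa using vsub_mem_direction hn hx)
  · have hxv : v +ᵥ x ∈ s := vadd_mem_of_mem_direction hv hx
    simpa using mem_tangentConeAt_of_segment_subset (s.convex.segment_subset hx hxv)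

theorem tangentConeAt_eq_empty (s : AffineSubspace ℝ E) {x : E} (hx : x ∉ s) :
    tangentConeAt ℝ (s : Set E) x = ∅ := by
  by_contra hne
  exact hx (s.closed_of_finiteDimensional.closure_subset
    (mem_closure_of_nonempty_tangentConeAt (nonempty_iff_ne_empty.2 hne)))

end AffineSubspace

section AffineComplex

variable {E ι : Type*} [NormedAddCommGroup E] [InnerProductSpace ℝ E] [FiniteDimensional ℝ E]
  [Finite ι] {S : ι → AffineSubspace ℝ E}

theorem tangentConeAt_iUnion_affineSubspace (S : ι → AffineSubspace ℝ E) (x : E) :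
    tangentConeAt ℝ (⋃ i, (S i : Set E)) x = ⋃ (i) (_ : x ∈ S i), ((S i).direction : Set E) := by
  rw [tangentConeAt_iUnion]
  refine iUnion_congr fun i => ?_
  by_cases hx : x ∈ S i
  · simp [hx, (S i).tangentConeAt_eq_direction_s3 hx]
  · simp [hx, (S i).tangentConeAt_eq_empty hx]

theorem tangentConeAt_iUnion_eq_direction_of_smoothPt
    (hmin : ∀ i j, i ≠ j → ¬ (S i : Set E) ⊆ S j) {x : E}
    (hx : SmoothPt (⋃ i, (S i : Set E)) x) {i : ι} (hi : x ∈ S i) :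
    tangentConeAt ℝ (⋃ i, (S i : Set E)) x = (S i).direction := by
  obtain ⟨K, hK⟩ := hx.exists_tangentConeAt_eq_submodule
  have hcone := tangentConeAt_iUnion_affineSubspace S x
  have hdir_le : ∀ j, x ∈ S j → (S j).direction ≤ K := fun j hj v hv => by
    rw [← SetLike.mem_coe, ← hK, hcone]
    exact mem_biUnion (x := j) hj hv
  obtain ⟨⟨j, hj⟩, hKj⟩ := Submodule.exists_le_of_subset_iUnion
    (q := fun j : {j // x ∈ S j} => (S j).direction) (by rw [← hK, hcone, iUnion_subtype])
  have hunique : ∀ l, x ∈ S l → l = j := fun l hl => by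
    by_contra hne
    exact hmin l j hne (AffineSubspace.le_of_direction_le_of_mem hl hj ((hdir_le l hl).trans hKj))
  rw [hK, hunique i hi]
  exact congrArg _ (le_antisymm hKj (hdir_le j hj))

theorem normalAt_iUnion_eq_orthogonal_of_smoothPt
    (hmin : ∀ i j, i ≠ j → ¬ (S i : Set E) ⊆ S j) {x : E}
    (hx : SmoothPt (⋃ i, (S i : Set E)) x) {i : ι} (hi : x ∈ S i) :
    NormalAt (⋃ i, (S i : Set E)) x = (S i).directionᗮ := by
  ext v
  simp [NormalAt, tangentConeAt_iUnion_eq_direction_of_smoothPt hmin hx hi,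
    Submodule.mem_orthogonal']

theorem eq_of_smoothPt_iUnion (hmin : ∀ i j, i ≠ j → ¬ (S i : Set E) ⊆ S j) {x : E}
    (hx : SmoothPt (⋃ i, (S i : Set E)) x) {i j : ι} (hi : x ∈ S i) (hj : x ∈ S j) : i = j := by
  by_contra hne
  have hdir : (S i).direction = (S j).direction := SetLike.coe_injective <|
    (tangentConeAt_iUnion_eq_direction_of_smoothPt hmin hx hi).symm.trans
      (tangentConeAt_iUnion_eq_direction_of_smoothPt hmin hx hj)
  exact hmin i j hne (AffineSubspace.ext_of_direction_eq hdir ⟨x, hi, hj⟩).le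

end AffineComplex

theorem AffineSubspace.mem_projSet_iff {E : Type*} [NormedAddCommGroup E] [InnerProductSpace ℝ E]
    (s : AffineSubspace ℝ E) [s.direction.HasOrthogonalProjection] {x y : E} :
    x ∈ projSet (s : Set E) y ↔ x ∈ s ∧ y - x ∈ s.directionᗮ := by
  refine and_congr_right fun hx => ?_
  have : Nonempty s := ⟨⟨x, hx⟩⟩
  rw [← EuclideanGeometry.dist_orthogonalProjection_eq_infDist, eq_comm,
    EuclideanGeometry.dist_orthogonalProjection_eq_dist_iff_eq_of_mem hx,
    EuclideanGeometry.coe_orthogonalProjection_eq_iff_mem]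
  exact and_iff_right hx

theorem crit_points_affine_complex_eq_union_general {n : ℕ} {ι : Type} [Fintype ι]
    (S : ι → AffineSubspace ℝ (EuclideanSpace ℝ (Fin n)))
    (hmin : ∀ i j, i ≠ j →
      ¬ ((S i : Set (EuclideanSpace ℝ (Fin n))) ⊆ (S j : Set (EuclideanSpace ℝ (Fin n)))))
    (y : EuclideanSpace ℝ (Fin n)) :
    ({x | EDCritPt (⋃ i, (S i : Set (EuclideanSpace ℝ (Fin n)))) y x}
      = ⋃ i, (projSet (S i : Set (EuclideanSpace ℝ (Fin n))) y ∩
          {x | SmoothPt (⋃ i, (S i : Set (EuclideanSpace ℝ (Fin n)))) x})) ∧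
    (∀ i j, i ≠ j →
      Disjoint
        (projSet (S i : Set (EuclideanSpace ℝ (Fin n))) y ∩
          {x | SmoothPt (⋃ i, (S i : Set (EuclideanSpace ℝ (Fin n)))) x})
        (projSet (S j : Set (EuclideanSpace ℝ (Fin n))) y ∩
          {x | SmoothPt (⋃ i, (S i : Set (EuclideanSpace ℝ (Fin n)))) x})) := by
  refine ⟨Set.ext fun x => ⟨fun ⟨hsm, hnormal⟩ => ?_, fun hx => ?_⟩, fun i j hij => ?_⟩
  · obtain ⟨i, hi⟩ := mem_iUnion.1 hsm.1
    rw [normalAt_iUnion_eq_orthogonal_of_smoothPt hmin hsm hi] at hnormal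
    exact mem_iUnion.2 ⟨i, (S i).mem_projSet_iff.2 ⟨hi, hnormal⟩, hsm⟩
  · obtain ⟨i, hproj, hsm⟩ := mem_iUnion.1 hx
    obtain ⟨hi, horth⟩ := (S i).mem_projSet_iff.1 hproj
    exact ⟨hsm, normalAt_iUnion_eq_orthogonal_of_smoothPt hmin hsm hi ▸ horth⟩
  · exact disjoint_left.2 fun x ⟨hpi, hsm⟩ ⟨hpj, _⟩ =>
      hij (eq_of_smoothPt_iUnion hmin hsm ((S i).mem_projSet_iff.1 hpi).1
        ((S j).mem_projSet_iff.1 hpj).1)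

/-- the ED critical points of `y` on a minimally defined affine complex `U`
are the disjoint union over `i` of `proj_{S i}(y) ∩ U*`, where `U*` is the set of
smooth points of `U`. -/
theorem crit_points_affine_complex_eq_union {n : ℕ} {ι : Type} [Fintype ι]
    (S : ι → AffineSubspace ℝ (EuclideanSpace ℝ (Fin n)))
    (hne : ∀ i, (S i : Set (EuclideanSpace ℝ (Fin n))).Nonempty)
    (hmin : ∀ i j, i ≠ j →
      ¬ ((S i : Set (EuclideanSpace ℝ (Fin n))) ⊆ (S j : Set (EuclideanSpace ℝ (Fin n)))))
    (y : EuclideanSpace ℝ (Fin n)) :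
    ({x | EDCritPt (⋃ i, (S i : Set (EuclideanSpace ℝ (Fin n)))) y x}
      = ⋃ i, (projSet (S i : Set (EuclideanSpace ℝ (Fin n))) y ∩
          {x | SmoothPt (⋃ i, (S i : Set (EuclideanSpace ℝ (Fin n)))) x})) ∧
    (∀ i j, i ≠ j →
      Disjoint
        (projSet (S i : Set (EuclideanSpace ℝ (Fin n))) y ∩
          {x | SmoothPt (⋃ i, (S i : Set (EuclideanSpace ℝ (Fin n)))) x})
        (projSet (S j : Set (EuclideanSpace ℝ (Fin n))) y ∩
          {x | SmoothPt (⋃ i, (S i : Set (EuclideanSpace ℝ (Fin n)))) x})) :=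
  crit_points_affine_complex_eq_union_general S hmin y
end
end

section
/- Fix integers 1 ≤ k ≤ n, and let E_{n,k} be the set of points in ℝⁿ having exactly k coordinates nonzero with all these nonzero coordinates equal in absolute value, together with points with the corresponding coordinates zero (i.e., k coordinates equal up to sign, the other n−k zero). Then E_{n,k} is a union of 2^{k−1}·C(n,k) lines/linear subspaces forming a minimally defined collection, and for almost every y ∈ ℝⁿ the number of ED critical points of y on E_{n,k} equals 2^{k−1}·C(n,k). -/
open scoped RealInnerProductSpace
open Matrix
open MeasureTheory

noncomputable section

/-- The set `E_{n,k}`: `k` coordinates equal up to sign, the rest zero. -/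
def Enk (n k : ℕ) : Set (EuclideanSpace ℝ (Fin n)) :=
  {x | ∃ A : Finset (Fin n), A.card = k ∧ ∃ t : ℝ, 0 ≤ t ∧ ∃ ε : Fin n → ℝ,
        IsSignFn ε ∧ ∀ i, x i = if i ∈ A then ε i * t else 0}

/-!
`E_{n,k}` is the union of the lines spanned by the sign vectors with `k` nonzero entries;
normalising a sign vector to be `+1` at the smallest index of its support picks one spanning
vector per line, which gives `2^{k-1}·C(n,k)` lines. Distinct lines meet only at `0`, so near a
nonzero point the union coincides with a single line `W`: the point is smooth with normal space
`Wᗮ`. Hence the ED critical points of `y` are exactly its orthogonal projections onto the lines,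
and these are nonzero and pairwise distinct unless `y` lies in one of the finitely many proper
subspaces `Wᗮ`, a null set.
-/

section TangentCone

variable {E : Type*} [NormedAddCommGroup E] [NormedSpace ℝ E] {K : Submodule ℝ E} {S U : Set E}
  {x : E}

theorem tangentConeAt_submodule (hK : IsClosed (K : Set E)) (hx : x ∈ K) :
    tangentConeAt ℝ (K : Set E) x = K := by
  ext w
  constructor
  · intro hw
    obtain ⟨_, l, _, c, d, -, hds, hcd⟩ := exists_fun_of_mem_tangentConeAt hw
    refine hK.mem_of_tendsto hcd (hds.mono fun m hm => K.smul_mem _ ?_)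
    simpa using K.sub_mem hm hx
  · intro hw
    simpa using mem_tangentConeAt_of_segment_subset (K.convex.segment_subset hx (K.add_mem hx hw))

theorem tangentConeAt_eq_of_inter_eq (hK : IsClosed (K : Set E)) (hU : IsOpen U) (hxU : x ∈ U)
    (hx : x ∈ K) (hSU : S ∩ U = (K : Set E) ∩ U) : tangentConeAt ℝ S x = K := by
  rw [← tangentConeAt_inter_nhds (hU.mem_nhds hxU), hSU, tangentConeAt_inter_nhds (hU.mem_nhds hxU),
    tangentConeAt_submodule hK hx]

end TangentCone

theorem smoothPt_of_inter_eq_s5 {E : Type*} [NormedAddCommGroup E] [NormedSpace ℝ E]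
    [FiniteDimensional ℝ E] {K : Submodule ℝ E} {S U : Set E} {x : E} (hU : IsOpen U)
    (hxU : x ∈ U) (hx : x ∈ K) (hSU : S ∩ U = (K : Set E) ∩ U) : SmoothPt S x := by
  let e : (E ⧸ K) ≃ₗ[ℝ] EuclideanSpace ℝ (Fin (Module.finrank ℝ (E ⧸ K))) :=
    LinearEquiv.ofFinrankEq _ _ (by simp)
  let f : E →L[ℝ] EuclideanSpace ℝ (Fin (Module.finrank ℝ (E ⧸ K))) :=
    LinearMap.toContinuousLinearMap (e.toLinearMap ∘ₗ K.mkQ)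
  refine ⟨(hSU ▸ ⟨hx, hxU⟩ : x ∈ S ∩ U).1, U, _, f, hU, hxU, f.contDiff.contDiffOn, ?_, ?_⟩
  · intro z hz
    rw [fderivWithin_of_isOpen hU hz, f.fderiv]
    exact e.surjective.comp K.mkQ_surjective
  · rw [hSU]
    ext z
    simp [f, and_comm]

theorem Submodule.disjoint_span_singleton_of_ne {K V : Type*} [DivisionRing K] [AddCommGroup V]
    [Module K V] {u v : V} (hne : (K ∙ u) ≠ (K ∙ v)) : Disjoint (K ∙ u) (K ∙ v) := by
  rw [Submodule.disjoint_span_singleton]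
  rintro hv
  obtain ⟨c, rfl⟩ := Submodule.mem_span_singleton.1 hv
  by_contra hcu
  have hc : c ≠ 0 := by rintro rfl; simp at hcu
  exact hne (Submodule.span_singleton_smul_eq (isUnit_iff_ne_zero.2 hc) u).symm

section PairwiseDisjoint

variable {R M : Type*} [Ring R] [AddCommGroup M] [Module R M] {L : Set (Submodule R M)}

theorem eq_of_mem_of_mem_of_pairwise_disjoint (hL : L.Pairwise Disjoint)
    {W W' : Submodule R M} (hW : W ∈ L) (hW' : W' ∈ L) {x : M} (hx0 : x ≠ 0) (hxW : x ∈ W)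
    (hxW' : x ∈ W') : W = W' := by
  by_contra hne
  exact hx0 ((Submodule.disjoint_def.1 (hL hW hW' hne)) x hxW hxW')

theorem not_le_of_pairwise_disjoint (hL : L.Pairwise Disjoint) (hL0 : ⊥ ∉ L)
    {W W' : Submodule R M} (hW : W ∈ L) (hW' : W' ∈ L) (hne : W ≠ W') : ¬ W ≤ W' := fun hle =>
  hL0 ((hL hW hW' hne).eq_bot_of_le hle ▸ hW)

end PairwiseDisjoint

section UnionOfSubspaces

variable {E : Type*} [NormedAddCommGroup E] [InnerProductSpace ℝ E] [FiniteDimensional ℝ E]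
  {L : Finset (Submodule ℝ E)}

theorem exists_isOpen_inter_biUnion_eq (hL : (L : Set (Submodule ℝ E)).Pairwise Disjoint)
    {W : Submodule ℝ E} (hW : W ∈ L) {x : E} (hx0 : x ≠ 0) (hxW : x ∈ W) :
    ∃ U : Set E, IsOpen U ∧ x ∈ U ∧ (⋃ W' ∈ L, (W' : Set E)) ∩ U = (W : Set E) ∩ U := by
  refine ⟨(⋃ W' ∈ L.erase W, (W' : Set E))ᶜ, ?_, ?_, ?_⟩
  · exact (Set.Finite.isClosed_biUnion (L.erase W).finite_toSet
      fun W' _ => W'.closed_of_finiteDimensional).isOpen_compl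
  · simp only [Set.mem_compl_iff, Set.mem_iUnion, Finset.mem_erase, SetLike.mem_coe, not_exists]
    exact fun W' ⟨hne, hW'⟩ hxW' => hne (eq_of_mem_of_mem_of_pairwise_disjoint hL hW' hW hx0 hxW' hxW)
  · ext z
    simp only [Set.mem_inter_iff, Set.mem_iUnion, Set.mem_compl_iff, Finset.mem_erase,
      SetLike.mem_coe, not_exists]
    constructor
    · rintro ⟨⟨W', hW', hzW'⟩, hz⟩
      obtain rfl : W' = W := by_contra fun hne => hz W' ⟨hne, hW'⟩ hzW'
      exact ⟨hzW', hz⟩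
    · exact fun ⟨hzW, hz⟩ => ⟨⟨W, hW, hzW⟩, hz⟩

theorem edCritPt_biUnion_iff (hL : (L : Set (Submodule ℝ E)).Pairwise Disjoint) {y : E}
    (hy : ∀ W ∈ L, y ∉ Wᗮ) {x : E} :
    EDCritPt (⋃ W ∈ L, (W : Set E)) y x ↔ ∃ W ∈ L, W.starProjection y = x := by
  constructor
  · rintro ⟨⟨hxS, -⟩, hnormal⟩
    simp only [Set.mem_iUnion, SetLike.mem_coe] at hxS
    obtain ⟨W, hW, hxW⟩ := hxS
    refine ⟨W, hW, W.eq_starProjection_of_mem_orthogonal hxW fun w hw => ?_⟩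
    rw [real_inner_comm]
    refine hnormal w (tangentConeAt_mono (s := (W : Set E)) ?_ ?_)
    · exact Set.subset_biUnion_of_mem (u := fun W : Submodule ℝ E => (W : Set E)) hW
    · rwa [tangentConeAt_submodule W.closed_of_finiteDimensional hxW]
  · rintro ⟨W, hW, rfl⟩
    have hx0 : W.starProjection y ≠ 0 := mt W.starProjection_apply_eq_zero_iff.1 (hy W hW)
    obtain ⟨U, hU, hxU, hSU⟩ := exists_isOpen_inter_biUnion_eq hL hW hx0 (W.starProjection_apply_mem y)
    refine ⟨smoothPt_of_inter_eq_s5 hU hxU (W.starProjection_apply_mem y) hSU, fun w hw => ?_⟩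
    rw [tangentConeAt_eq_of_inter_eq W.closed_of_finiteDimensional hU hxU
      (W.starProjection_apply_mem y) hSU] at hw
    exact W.inner_left_of_mem_orthogonal hw (W.sub_starProjection_mem_orthogonal y)

theorem ncard_setOf_edCritPt_biUnion (hL : (L : Set (Submodule ℝ E)).Pairwise Disjoint) {y : E}
    (hy : ∀ W ∈ L, y ∉ Wᗮ) :
    {x | EDCritPt (⋃ W ∈ L, (W : Set E)) y x}.ncard = L.card := by
  have hcrit : {x | EDCritPt (⋃ W ∈ L, (W : Set E)) y x} =
      (fun W : Submodule ℝ E => W.starProjection y) '' L := by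
    ext x
    simp [edCritPt_biUnion_iff hL hy]
  rw [hcrit, Set.InjOn.ncard_image, Set.ncard_coe_finset]
  intro W hW W' hW' h
  have hx0 : W.starProjection y ≠ 0 := mt W.starProjection_apply_eq_zero_iff.1 (hy W hW)
  refine eq_of_mem_of_mem_of_pairwise_disjoint hL hW hW' hx0 (W.starProjection_apply_mem y) ?_
  exact (show W.starProjection y = W'.starProjection y from h) ▸ W'.starProjection_apply_mem y

theorem ae_ncard_setOf_edCritPt_biUnion [MeasurableSpace E] [BorelSpace E]
    (μ : Measure E) [μ.IsAddHaarMeasure]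
    (hL : (L : Set (Submodule ℝ E)).Pairwise Disjoint) (hL0 : ⊥ ∉ L) :
    ∀ᵐ y ∂μ, {x | EDCritPt (⋃ W ∈ L, (W : Set E)) y x}.ncard = L.card := by
  have hnull : ∀ᵐ y ∂μ, ∀ W ∈ L, y ∉ Wᗮ := by
    refine (ae_ball_iff L.countable_toSet).2 fun W hW => ?_
    refine measure_eq_zero_iff_ae_notMem.1 (μ.addHaar_submodule _ fun htop => ?_)
    exact hL0 ((Submodule.orthogonal_eq_top_iff W).1 htop ▸ hW)
  filter_upwards [hnull] with y hy using ncard_setOf_edCritPt_biUnion hL hy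

end UnionOfSubspaces

section SignVectors

open Finset

variable {α : Type*} [LinearOrder α]

def nonMinimal (A : Finset α) : Finset α :=
  A.filter fun i => ∃ j ∈ A, j < i

theorem nonMinimal_eq_erase_min' {A : Finset α} (hA : A.Nonempty) :
    nonMinimal A = A.erase (A.min' hA) := by
  ext i
  simp only [nonMinimal, mem_filter, mem_erase]
  constructor
  · rintro ⟨hi, j, hj, hji⟩
    exact ⟨((A.min'_le j hj).trans_lt hji).ne', hi⟩
  · rintro ⟨hne, hi⟩
    exact ⟨hi, A.min' hA, A.min'_mem hA, lt_of_le_of_ne (A.min'_le i hi) hne.symm⟩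

theorem nonMinimal_subset (A : Finset α) : nonMinimal A ⊆ A :=
  filter_subset _ _

variable {n k : ℕ}

def signVec (A T : Finset (Fin n)) : EuclideanSpace ℝ (Fin n) :=
  WithLp.toLp 2 fun i => if i ∈ A then (if i ∈ T then -1 else 1) else 0

@[simp]
theorem signVec_apply (A T : Finset (Fin n)) (i : Fin n) :
    signVec A T i = if i ∈ A then (if i ∈ T then -1 else 1) else 0 :=
  rfl

/-- Requiring `T` to avoid `min A` normalises the sign vector to `+1` at `min A`, so each line
through `E_{n,k}` is indexed exactly once. -/
def signIdx (n k : ℕ) : Finset ((_ : Finset (Fin n)) × Finset (Fin n)) :=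
  (powersetCard k univ).sigma fun A => (nonMinimal A).powerset

theorem mem_signIdx {p : (_ : Finset (Fin n)) × Finset (Fin n)} :
    p ∈ signIdx n k ↔ #p.1 = k ∧ p.2 ⊆ nonMinimal p.1 := by
  simp [signIdx]

theorem card_signIdx (hk : 1 ≤ k) : #(signIdx n k) = 2 ^ (k - 1) * n.choose k := by
  rw [signIdx, card_sigma, sum_const_nat fun A hA => ?_, card_powersetCard, card_univ,
    Fintype.card_fin, mul_comm]
  have hAk : #A = k := mem_powersetCard_univ.1 hA
  have hA0 : A.Nonempty := card_pos.1 (by omega)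
  rw [card_powerset, nonMinimal_eq_erase_min' hA0, card_erase_of_mem (A.min'_mem hA0), hAk]

theorem signVec_apply_eq_zero_iff {A T : Finset (Fin n)} {i : Fin n} :
    signVec A T i = 0 ↔ i ∉ A := by
  by_cases hA : i ∈ A <;> by_cases hT : i ∈ T <;> simp [hA, hT]

theorem signVec_apply_eq_neg_one_iff {A T : Finset (Fin n)} (hTA : T ⊆ A) {i : Fin n} :
    signVec A T i = -1 ↔ i ∈ T := by
  by_cases hT : i ∈ T
  · simp [hTA hT, hT]
  · by_cases hA : i ∈ A <;> norm_num [hA, hT]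

theorem span_signVec_injOn :
    Set.InjOn (fun p : (_ : Finset (Fin n)) × Finset (Fin n) => ℝ ∙ signVec p.1 p.2)
      (signIdx n k) := by
  rintro ⟨A, T⟩ hp ⟨B, T'⟩ hq h
  have hTA : T ⊆ A := (mem_signIdx.1 hp).2.trans (nonMinimal_subset A)
  have hT'B : T' ⊆ B := (mem_signIdx.1 hq).2.trans (nonMinimal_subset B)
  obtain ⟨c, hc⟩ := Submodule.span_singleton_eq_span_singleton.1 h
  have hci (i : Fin n) : (c : ℝ) * signVec A T i = signVec B T' i := by
    simpa [Units.smul_def] using congrArg (· i) hc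
  have hAB : A = B := by
    ext i
    rw [← not_iff_not, ← signVec_apply_eq_zero_iff (T := T), ← signVec_apply_eq_zero_iff (T := T'),
      ← hci, mul_eq_zero, or_iff_right c.ne_zero]
  subst hAB
  rcases A.eq_empty_or_nonempty with rfl | hA
  · rw [subset_empty.1 hTA, subset_empty.1 hT'B]
  have hmin {S : Finset (Fin n)} (hS : S ⊆ nonMinimal A) : signVec A S (A.min' hA) = 1 := by
    have : A.min' hA ∉ S := fun h => by simpa [nonMinimal_eq_erase_min' hA] using hS h
    simp [A.min'_mem hA, this]
  have hc1 : (c : ℝ) = 1 := by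
    simpa only [hmin (mem_signIdx.1 hp).2, hmin (mem_signIdx.1 hq).2, mul_one] using
      hci (A.min' hA)
  congr 1
  ext i
  rw [← signVec_apply_eq_neg_one_iff hTA, ← signVec_apply_eq_neg_one_iff hT'B, ← hci, hc1, one_mul]

theorem span_signVec_subset_Enk (A T : Finset (Fin n)) :
    ((ℝ ∙ signVec A T : Submodule ℝ _) : Set (EuclideanSpace ℝ (Fin n))) ⊆ Enk n #A := by
  intro x hx
  obtain ⟨c, rfl⟩ := Submodule.mem_span_singleton.1 hx
  set s : ℝ := if c < 0 then -1 else 1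
  have hs : s * |c| = c := by
    by_cases hc : c < 0 <;> simp [s, hc, abs_of_neg, abs_of_nonneg, not_lt.1]
  refine ⟨A, rfl, |c|, abs_nonneg c, fun i => s * (if i ∈ T then -1 else 1), fun i => ?_, fun i => ?_⟩
  · by_cases hc : c < 0 <;> by_cases hT : i ∈ T <;> simp [s, hc, hT]
  · by_cases hA : i ∈ A <;> by_cases hT : i ∈ T <;> simp [hA, hT] <;> linarith

theorem Enk_subset_biUnion_span_signVec (hk : 1 ≤ k) :
    Enk n k ⊆ ⋃ p ∈ signIdx n k, ((ℝ ∙ signVec p.1 p.2 : Submodule ℝ _) : Set _) := by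
  rintro x ⟨A, hAk, t, -, ε, hε, hx⟩
  have hA : A.Nonempty := card_pos.1 (by omega)
  set m := A.min' hA
  set T := A.filter fun i => ε i ≠ ε m
  have hT : T ⊆ nonMinimal A := by
    intro i hi
    rw [nonMinimal_eq_erase_min' hA, mem_erase]
    exact ⟨fun him => (mem_filter.1 hi).2 (him ▸ rfl), (mem_filter.1 hi).1⟩
  refine Set.mem_biUnion (x := ⟨A, T⟩) (mem_signIdx.2 ⟨hAk, hT⟩) ?_
  refine Submodule.mem_span_singleton.2 ⟨ε m * t, ?_⟩
  ext i
  rw [hx i]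
  by_cases hiA : i ∈ A <;> simp only [PiLp.smul_apply, signVec_apply, hiA, T, mem_filter]
  · rcases hε i with hi | hi <;> rcases hε m with hm | hm <;> norm_num [hi, hm]
  · simp

def enkLines (n k : ℕ) : Finset (Submodule ℝ (EuclideanSpace ℝ (Fin n))) :=
  (signIdx n k).image fun p => ℝ ∙ signVec p.1 p.2

theorem card_enkLines (hk : 1 ≤ k) : #(enkLines n k) = 2 ^ (k - 1) * n.choose k := by
  rw [enkLines, card_image_of_injOn span_signVec_injOn, card_signIdx hk]

theorem biUnion_enkLines (hk : 1 ≤ k) : ⋃ W ∈ enkLines n k, (W : Set _) = Enk n k := by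
  rw [enkLines, set_biUnion_finset_image]
  refine (Set.iUnion₂_subset fun p hp => ?_).antisymm (Enk_subset_biUnion_span_signVec hk)
  simpa only [(mem_signIdx.1 hp).1] using span_signVec_subset_Enk p.1 p.2

theorem pairwise_disjoint_enkLines :
    (enkLines n k : Set (Submodule ℝ (EuclideanSpace ℝ (Fin n)))).Pairwise Disjoint := by
  simp only [enkLines, coe_image]
  rintro _ ⟨p, -, rfl⟩ _ ⟨q, -, rfl⟩ hne
  exact Submodule.disjoint_span_singleton_of_ne hne

theorem bot_notMem_enkLines (hk : 1 ≤ k) : ⊥ ∉ enkLines n k := by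
  simp only [enkLines, mem_image, not_exists, not_and]
  intro p hp h0
  rw [Submodule.span_singleton_eq_bot] at h0
  obtain ⟨i, hi⟩ := card_pos.1 ((mem_signIdx.1 hp).1 ▸ hk : 0 < #p.1)
  exact signVec_apply_eq_zero_iff.1 (congrArg (· i) h0) hi

end SignVectors

theorem crit_points_Enk_general {n k : ℕ} (hk : 1 ≤ k) :
    (∃ L : Finset (Set (EuclideanSpace ℝ (Fin n))),
      L.card = 2 ^ (k - 1) * Nat.choose n k ∧
      (∀ W ∈ L, ∃ p : Submodule ℝ (EuclideanSpace ℝ (Fin n)), W = (p : Set _)) ∧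
      (∀ W ∈ L, ∀ W' ∈ L, W ≠ W' → ¬ W ⊆ W') ∧
      (⋃ W ∈ L, W) = Enk n k) ∧
    (∀ᵐ y ∂(MeasureTheory.volume : MeasureTheory.Measure (EuclideanSpace ℝ (Fin n))),
      {x | EDCritPt (Enk n k) y x}.ncard = 2 ^ (k - 1) * Nat.choose n k) := by
  have hL := pairwise_disjoint_enkLines (n := n) (k := k)
  have hL0 := bot_notMem_enkLines (n := n) hk
  refine ⟨⟨(enkLines n k).image (↑), ?_, ?_, ?_, ?_⟩, ?_⟩
  · rw [Finset.card_image_of_injective _ SetLike.coe_injective, card_enkLines hk]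
  · simp only [Finset.mem_image]
    rintro _ ⟨W, -, rfl⟩
    exact ⟨W, rfl⟩
  · simp only [Finset.mem_image]
    rintro _ ⟨W, hW, rfl⟩ _ ⟨W', hW', rfl⟩ hne
    exact not_le_of_pairwise_disjoint hL hL0 hW hW' (ne_of_apply_ne _ hne)
  · rw [Finset.set_biUnion_finset_image, biUnion_enkLines hk]
  · simpa only [biUnion_enkLines hk, card_enkLines hk] using
      ae_ncard_setOf_edCritPt_biUnion volume hL hL0

/-- `E_{n,k}` is a minimally defined union of `2^{k-1}·C(n,k)` linear
subspaces, and for almost every `y` the number of ED critical points of `y` on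
`E_{n,k}` equals `2^{k-1}·C(n,k)`. -/
theorem crit_points_Enk {n k : ℕ} (hk : 1 ≤ k) (hkn : k ≤ n) :
    (∃ L : Finset (Set (EuclideanSpace ℝ (Fin n))),
      L.card = 2 ^ (k - 1) * Nat.choose n k ∧
      (∀ W ∈ L, ∃ p : Submodule ℝ (EuclideanSpace ℝ (Fin n)), W = (p : Set _)) ∧
      (∀ W ∈ L, ∀ W' ∈ L, W ≠ W' → ¬ W ⊆ W') ∧
      (⋃ W ∈ L, W) = Enk n k) ∧
    (∀ᵐ y ∂(MeasureTheory.volume : MeasureTheory.Measure (EuclideanSpace ℝ (Fin n))),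
      {x | EDCritPt (Enk n k) y x}.ncard = 2 ^ (k - 1) * Nat.choose n k) :=
  crit_points_Enk_general hk
end
end

section
/- A set M ⊆ ℝ^{n×t} (n ≤ t) is orthogonally invariant (M = U M Vᵀ for all orthogonal U ∈ O(n), V ∈ O(t)) if and only if there exists an absolutely symmetric set S ⊆ ℝⁿ (invariant under all signed permutations of coordinates) with M = σ⁻¹(S), where σ(X) is the vector of singular values of X in non-increasing order. -/
open scoped RealInnerProductSpace
open Matrix
open MeasureTheory

noncomputable section

/-! The group `O(n) × O(t)` acts on `n × t` matrices by `X ↦ U X Vᵀ`. The singular values are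
constant on its orbits, since `(U X Vᵀ)(U X Vᵀ)ᵀ = U (X Xᵀ) Uᵀ` has the characteristic polynomial
of `X Xᵀ`; so `σ⁻¹(S)` is orthogonally invariant for every `S`. Conversely, the singular value
decomposition puts `diagRect (σ X)` in the orbit of `X`, and since `n ≤ t` a signed permutation of
the diagonal of `diagRect x` is realised by a signed permutation matrix on the left and a
permutation matrix on the right. Hence an orthogonally invariant `M` is `σ⁻¹(S)` for the
absolutely symmetric set `S = {x | diagRect x ∈ M}`. -/

namespace Matrix

variable {m n : Type*} [Fintype m] [Fintype n] [DecidableEq m] [DecidableEq n]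

def OrthEquiv (X Y : Matrix m n ℝ) : Prop :=
  ∃ (U : Matrix m m ℝ) (V : Matrix n n ℝ), U * Uᵀ = 1 ∧ V * Vᵀ = 1 ∧ Y = U * X * Vᵀ

namespace OrthEquiv

theorem symm {X Y : Matrix m n ℝ} (h : OrthEquiv X Y) : OrthEquiv Y X := by
  obtain ⟨U, V, hU, hV, rfl⟩ := h
  refine ⟨Uᵀ, Vᵀ, by simpa using mul_eq_one_comm.mp hU, by simpa using mul_eq_one_comm.mp hV, ?_⟩
  simp only [transpose_transpose, ← Matrix.mul_assoc, mul_eq_one_comm.mp hU, Matrix.one_mul]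
  rw [Matrix.mul_assoc, mul_eq_one_comm.mp hV, Matrix.mul_one]

theorem trans {X Y Z : Matrix m n ℝ} (h₁ : OrthEquiv X Y) (h₂ : OrthEquiv Y Z) :
    OrthEquiv X Z := by
  obtain ⟨U₁, V₁, hU₁, hV₁, rfl⟩ := h₁
  obtain ⟨U₂, V₂, hU₂, hV₂, rfl⟩ := h₂
  refine ⟨U₂ * U₁, V₂ * V₁, ?_, ?_, ?_⟩
  · rw [transpose_mul, Matrix.mul_assoc, ← Matrix.mul_assoc U₁, hU₁, Matrix.one_mul, hU₂]
  · rw [transpose_mul, Matrix.mul_assoc, ← Matrix.mul_assoc V₁, hV₁, Matrix.one_mul, hV₂]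
  · simp only [transpose_mul, Matrix.mul_assoc]

end OrthEquiv

theorem charpoly_mul_transpose_eq_of_orthEquiv {X Y : Matrix m n ℝ} (h : OrthEquiv X Y) :
    (Y * Yᵀ).charpoly = (X * Xᵀ).charpoly := by
  obtain ⟨U, V, hU, hV, rfl⟩ := h
  have hV' : Vᵀ * V = 1 := mul_eq_one_comm.mp hV
  calc (U * X * Vᵀ * (U * X * Vᵀ)ᵀ).charpoly = (U * (X * Xᵀ * Uᵀ)).charpoly := by
        simp only [transpose_mul, transpose_transpose, Matrix.mul_assoc]
        rw [← Matrix.mul_assoc Vᵀ V, hV', Matrix.one_mul]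
    _ = (X * Xᵀ * Uᵀ * U).charpoly := charpoly_mul_comm _ _
    _ = (X * Xᵀ).charpoly := by rw [Matrix.mul_assoc, mul_eq_one_comm.mp hU, Matrix.mul_one]


theorem permMatrix_mul_transpose_self {R ι : Type*} [NonAssocSemiring R] [Fintype ι]
    [DecidableEq ι] (σ : Equiv.Perm ι) : σ.permMatrix R * (σ.permMatrix R)ᵀ = 1 := by
  rw [transpose_permMatrix, ← permMatrix_mul, inv_mul_cancel, permMatrix_one]

theorem mul_transpose_self_eq_one_of_mem_unitaryGroup {ι : Type*} [Fintype ι]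
    [DecidableEq ι] {A : Matrix ι ι ℝ} (hA : A ∈ unitaryGroup ι ℝ) : A * Aᵀ = 1 := by
  simpa [star_eq_conjTranspose] using mem_unitaryGroup_iff.mp hA

end Matrix

theorem exists_orthonormalBasis_norm_smul_eq {E : Type*} [NormedAddCommGroup E]
    [InnerProductSpace ℝ E] [FiniteDimensional ℝ E] {ι κ : Type*} [Fintype κ] (e : ι ↪ κ)
    (hκ : Module.finrank ℝ E = Fintype.card κ) {w : ι → E}
    (hw : Pairwise fun i j => ⟪w i, w j⟫ = 0) :
    ∃ b : OrthonormalBasis κ ℝ E, ∀ i, w i = ‖w i‖ • b (e i) := by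
  set v : κ → E := Function.extend e (fun i => ‖w i‖⁻¹ • w i) 0
  have hv (i : ι) : v (e i) = ‖w i‖⁻¹ • w i := e.injective.extend_apply _ _ i
  have hon : Orthonormal ℝ ((e '' {i | w i ≠ 0}).domRestrict v) := by
    refine ⟨?_, ?_⟩
    · rintro ⟨_, i, hi, rfl⟩
      simp only [Set.domRestrict_apply, hv]
      exact norm_smul_inv_norm hi
    · rintro ⟨_, i, hi, rfl⟩ ⟨_, j, hj, rfl⟩ hab
      have hij : i ≠ j := by rintro rfl; exact hab rfl
      simp only [Set.domRestrict_apply, hv, inner_smul_left, inner_smul_right, hw hij, mul_zero]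
  obtain ⟨b, hb⟩ := hon.exists_orthonormalBasis_extension_of_card_eq hκ
  refine ⟨b, fun i => ?_⟩
  by_cases hi : w i = 0
  · simp [hi]
  · rw [hb _ ⟨i, hi, rfl⟩, hv, smul_smul, mul_inv_cancel₀ (norm_ne_zero_iff.mpr hi), one_smul]

section

variable {n t : ℕ}

theorem singvals_eq_of_orthEquiv {X Y : Matrix (Fin n) (Fin t) ℝ}
    (h : OrthEquiv X Y) : singvals Y = singvals X := by
  have heig : (isHermitian_mul_conjTranspose_self Y).eigenvalues =
      (isHermitian_mul_conjTranspose_self X).eigenvalues := by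
    rw [IsHermitian.eigenvalues_eq_eigenvalues_iff, conjTranspose_eq_transpose_of_trivial,
      conjTranspose_eq_transpose_of_trivial]
    exact charpoly_mul_transpose_eq_of_orthEquiv h
  unfold singvals
  rw [heig]

theorem orthInv_iff {M : Set (Matrix (Fin n) (Fin t) ℝ)} :
    OrthInv M ↔ ∀ X Y, OrthEquiv X Y → X ∈ M → Y ∈ M := by
  refine ⟨?_, fun h U V hU hV => ?_⟩
  · rintro hM X _ ⟨U, V, hU, hV, rfl⟩ hX
    exact hM U V hU hV ▸ Set.mem_image_of_mem _ hX
  · refine Set.Subset.antisymm ?_ fun Y hY => ?_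
    · rintro _ ⟨X, hX, rfl⟩
      exact h X _ ⟨U, V, hU, hV, rfl⟩ hX
    · refine ⟨Uᵀ * Y * V, h Y _ ⟨Uᵀ, Vᵀ, ?_, ?_, rfl⟩ hY, ?_⟩
      · rw [transpose_transpose, mul_eq_one_comm.mp hU]
      · rw [transpose_transpose, mul_eq_one_comm.mp hV]
      · dsimp only
        rw [← Matrix.mul_assoc, ← Matrix.mul_assoc, hU, Matrix.one_mul, Matrix.mul_assoc, hV,
            Matrix.mul_one]

theorem OrthInv.mem_iff {M : Set (Matrix (Fin n) (Fin t) ℝ)} (hM : OrthInv M)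
    {X Y : Matrix (Fin n) (Fin t) ℝ} (h : OrthEquiv X Y) : X ∈ M ↔ Y ∈ M :=
  ⟨orthInv_iff.mp hM X Y h, orthInv_iff.mp hM Y X h.symm⟩

theorem diagRect_mul_apply {m : ℕ} (hnt : n ≤ t) (x : Fin n → ℝ)
    (B : Matrix (Fin t) (Fin m) ℝ) (i : Fin n) (k : Fin m) :
    ((diagRect x : Matrix (Fin n) (Fin t) ℝ) * B) i k = x i * B (Fin.castLE hnt i) k := by
  have hj (j : Fin t) : (j : ℕ) = i ↔ j = Fin.castLE hnt i := by simp [Fin.ext_iff]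
  simp [mul_apply, diagRect, hj]

theorem orthEquiv_diagRect_mul_sign {ε : Fin n → ℝ} (hε : IsSignFn ε)
    (x : Fin n → ℝ) :
    OrthEquiv (diagRect x : Matrix (Fin n) (Fin t) ℝ) (diagRect fun i => ε i * x i) := by
  refine ⟨diagonal ε, 1, ?_, by simp, ?_⟩
  · rw [diagonal_transpose, diagonal_mul_diagonal, ← diagonal_one]
    congr 1
    funext i
    rcases hε i with h | h <;> simp [h]
  · ext i j
    simp [diagRect, diagonal_mul]

theorem orthEquiv_diagRect_comp_perm (hnt : n ≤ t) (π : Equiv.Perm (Fin n))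
    (x : Fin n → ℝ) :
    OrthEquiv (diagRect x : Matrix (Fin n) (Fin t) ℝ) (diagRect (x ∘ π)) := by
  set ρ := π.viaFintypeEmbedding (Fin.castLEEmb hnt)
  have hρ (i : Fin n) (j : Fin t) : (ρ j : ℕ) = π i ↔ (j : ℕ) = i := by
    rw [← Fin.val_castLE hnt (π i), ← Fin.val_castLE hnt i, Fin.val_inj, Fin.val_inj,
      ← Fin.castLEEmb_apply, ← Fin.castLEEmb_apply, ← Equiv.Perm.viaFintypeEmbedding_apply_image,
      ρ.injective.eq_iff]
  refine ⟨π.permMatrix ℝ, ρ.permMatrix ℝ, permMatrix_mul_transpose_self π,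
    permMatrix_mul_transpose_self ρ, ?_⟩
  rw [transpose_permMatrix, PEquiv.toMatrix_toPEquiv_mul, PEquiv.mul_toMatrix_toPEquiv]
  ext i j
  simp [diagRect, Equiv.Perm.inv_def, hρ]

theorem exists_eq_diagRect_mul_of_mul_transpose_eq_diagonal (hnt : n ≤ t)
    {Y : Matrix (Fin n) (Fin t) ℝ} {d : Fin n → ℝ} (hY : Y * Yᵀ = diagonal d) :
    ∃ V : Matrix (Fin t) (Fin t) ℝ,
      V * Vᵀ = 1 ∧ Y = (diagRect (fun i => √(d i)) : Matrix (Fin n) (Fin t) ℝ) * Vᵀ := by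
  set w : Fin n → EuclideanSpace ℝ (Fin t) := fun i => WithLp.toLp 2 (Y i)
  have hinner (i j : Fin n) : ⟪w i, w j⟫ = diagonal d i j := by
    rw [← hY]
    simp [w, mul_apply, PiLp.inner_apply, mul_comm]
  obtain ⟨b, hb⟩ := exists_orthonormalBasis_norm_smul_eq (Fin.castLEEmb hnt)
    (by simp) (w := w) fun i j hij => (hinner i j).trans (diagonal_apply_ne _ hij)
  have hnorm (i : Fin n) : ‖w i‖ = √(d i) := by
    rw [norm_eq_sqrt_real_inner, hinner, diagonal_apply_eq]
  refine ⟨(EuclideanSpace.basisFun (Fin t) ℝ).toBasis.toMatrix b.toBasis,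
    mul_transpose_self_eq_one_of_mem_unitaryGroup
      ((EuclideanSpace.basisFun (Fin t) ℝ).toMatrix_orthonormalBasis_mem_unitary b), ?_⟩
  ext i k
  rw [diagRect_mul_apply hnt, ← hnorm]
  simpa [w, Module.Basis.toMatrix_apply] using congrArg (· k) (hb i)

theorem orthEquiv_diagRect_sqrt_eigenvalues (hnt : n ≤ t)
    (X : Matrix (Fin n) (Fin t) ℝ) :
    OrthEquiv (diagRect fun i => √((isHermitian_mul_conjTranspose_self X).eigenvalues i)) X := by
  set hA := isHermitian_mul_conjTranspose_self X
  set W : Matrix (Fin n) (Fin n) ℝ := ↑hA.eigenvectorUnitary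
  have hW : W * Wᵀ = 1 := mul_transpose_self_eq_one_of_mem_unitaryGroup hA.eigenvectorUnitary.2
  have hdiag : Wᵀ * X * (Wᵀ * X)ᵀ = diagonal hA.eigenvalues := by
    have h := hA.conjStarAlgAut_star_eigenvectorUnitary
    rw [Unitary.conjStarAlgAut_apply, Unitary.coe_star, star_star, star_eq_conjTranspose,
      conjTranspose_eq_transpose_of_trivial, RCLike.ofReal_real_eq_id, Function.id_comp] at h
    rw [transpose_mul, transpose_transpose, ← conjTranspose_eq_transpose_of_trivial X, ← h]
    simp only [W, Matrix.mul_assoc]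
  obtain ⟨V, hV, hWX⟩ := exists_eq_diagRect_mul_of_mul_transpose_eq_diagonal hnt hdiag
  refine ⟨W, V, hW, hV, ?_⟩
  rw [Matrix.mul_assoc, ← hWX, ← Matrix.mul_assoc, hW, Matrix.one_mul]

theorem orthEquiv_diagRect_singvals (hnt : n ≤ t) (X : Matrix (Fin n) (Fin t) ℝ) :
    OrthEquiv X (diagRect (singvals X)) :=
  -- `singvals X` is the vector of these square roots reordered by `Tuple.sort`.
  (orthEquiv_diagRect_sqrt_eigenvalues hnt X).symm.trans
    (orthEquiv_diagRect_comp_perm hnt _ _)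

end

/-- a set of matrices is orthogonally invariant iff it is `σ⁻¹(S)` for an
absolutely symmetric set `S ⊆ ℝⁿ`. -/
theorem orthInv_iff_exists_absSymm {n t : ℕ} (hnt : n ≤ t)
    (M : Set (Matrix (Fin n) (Fin t) ℝ)) :
    OrthInv M ↔ ∃ S : Set (EuclideanSpace ℝ (Fin n)),
      AbsSymm S ∧ M = {X | singvals X ∈ S} := by
  constructor
  · intro hM
    refine ⟨{x | (diagRect x : Matrix (Fin n) (Fin t) ℝ) ∈ M}, fun π ε hε x => ?_, ?_⟩
    · exact hM.mem_iff ((orthEquiv_diagRect_comp_perm hnt π x).trans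
        (orthEquiv_diagRect_mul_sign hε _))
    · ext X
      exact hM.mem_iff (orthEquiv_diagRect_singvals hnt X)
  · rintro ⟨S, -, rfl⟩
    exact orthInv_iff.mpr fun X Y h (hX : singvals X ∈ S) =>
      show singvals Y ∈ S from singvals_eq_of_orthEquiv h ▸ hX
end
end

section
/- For the essential variety E = {X ∈ ℝ^{3×3} : σ₁(X) = σ₂(X), σ₃(X) = 0}: given Y ∈ ℝ^{3×3} with SVD Y = U Diag(σ₁,σ₂,σ₃)Vᵀ, the matrix U Diag((σ₁+σ₂)/2, (σ₁+σ₂)/2, 0) Vᵀ is a nearest element of E to Y in Frobenius norm. -/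
open scoped RealInnerProductSpace
open Matrix
open MeasureTheory

noncomputable section

/-! By orthogonal invariance of singular values it suffices to treat `Y = diag σ` with
`σ₁ ≥ σ₂ ≥ σ₃ ≥ 0`. Let `N ∈ E` have singular values `(t, t, 0)`. Then `‖N‖² = 2t²`, every entry
of `N` is at most `t`, and `det N = 0` forces `tr N ≤ √2 ‖N‖ = 2t`. Abel summation against the
decreasing `σ` gives `⟪diag σ, N⟫ ≤ t (σ₁ + σ₂)`, so
`‖diag σ - N‖² ≥ ‖σ‖² - 2t (σ₁ + σ₂) + 2t²`, which is minimal at `t = (σ₁ + σ₂)/2`, where it is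
attained by `N = diag(t, t, 0)`. -/

section SingularValues

variable {n t : ℕ}

lemma diagRect_self (x : Fin n → ℝ) : (diagRect x : Matrix (Fin n) (Fin n) ℝ) = diagonal x := by
  ext i j
  simp [diagRect, diagonal_apply, Fin.val_inj, eq_comm]

lemma toEuc_sub (A B : Matrix (Fin n) (Fin t) ℝ) : toEuc (A - B) = toEuc A - toEuc B :=
  rfl

lemma inner_toEuc (A B : Matrix (Fin n) (Fin t) ℝ) : ⟪toEuc A, toEuc B⟫ = trace (A * Bᵀ) := by
  simp [toEuc, PiLp.inner_apply, trace, mul_apply, Fintype.sum_prod_type, mul_comm]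

lemma norm_toEuc_sq (A : Matrix (Fin n) (Fin t) ℝ) : ‖toEuc A‖ ^ 2 = trace (A * Aᵀ) := by
  rw [← real_inner_self_eq_norm_sq, inner_toEuc]

lemma singvals_nonneg (X : Matrix (Fin n) (Fin t) ℝ) (i : Fin n) : 0 ≤ singvals X i :=
  Real.sqrt_nonneg _

lemma singvals_antitone (X : Matrix (Fin n) (Fin t) ℝ) : Antitone (singvals X) := by
  intro i j hij
  simpa [singvals] using
    Tuple.monotone_sort (fun j => -√((isHermitian_mul_conjTranspose_self X).eigenvalues j)) hij

lemma exists_orthogonal_mul_transpose_eq_diagonal_singvals_sq (X : Matrix (Fin n) (Fin t) ℝ) :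
    ∃ W : Matrix (Fin n) (Fin n) ℝ, W * Wᵀ = 1 ∧
      X * Xᵀ = W * diagonal (fun i => singvals X i ^ 2) * Wᵀ := by
  set hA := isHermitian_mul_conjTranspose_self X
  set Q : Matrix (Fin n) (Fin n) ℝ := ↑hA.eigenvectorUnitary
  set e := Tuple.sort fun j => -√(hA.eigenvalues j)
  have hQ : Q * Qᵀ = 1 := by
    simpa [Q, star_eq_conjTranspose] using mem_unitaryGroup_iff.mp hA.eigenvectorUnitary.2
  have hXX : X * Xᵀ = Q * diagonal hA.eigenvalues * Qᵀ := by
    simpa [Q, Function.comp_def, star_eq_conjTranspose] using hA.spectral_theorem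
  have hσ : (fun i => singvals X i ^ 2) = hA.eigenvalues ∘ e := by
    ext i
    exact Real.sq_sqrt ((posSemidef_self_mul_conjTranspose X).eigenvalues_nonneg _)
  refine ⟨Q.submatrix id e, ?_, ?_⟩
  · rw [transpose_submatrix, submatrix_mul_equiv, submatrix_id_id, hQ]
  · rw [hσ, hXX, ← submatrix_diagonal_equiv, transpose_submatrix, submatrix_mul_equiv,
      submatrix_mul_equiv, submatrix_id_id]

lemma norm_toEuc_sq_eq_sum_singvals_sq (X : Matrix (Fin n) (Fin t) ℝ) :
    ‖toEuc X‖ ^ 2 = ∑ i, singvals X i ^ 2 := by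
  obtain ⟨W, hW, hXX⟩ := exists_orthogonal_mul_transpose_eq_diagonal_singvals_sq X
  rw [norm_toEuc_sq, hXX, trace_mul_cycle, mul_eq_one_comm.mp hW, Matrix.one_mul, trace_diagonal]

lemma det_sq_eq_prod_singvals_sq (X : Matrix (Fin n) (Fin n) ℝ) :
    X.det ^ 2 = ∏ i, singvals X i ^ 2 := by
  obtain ⟨W, hW, hXX⟩ := exists_orthogonal_mul_transpose_eq_diagonal_singvals_sq X
  have hdet := congrArg det hXX
  rw [det_mul, det_transpose, det_mul, det_mul, det_transpose, det_diagonal] at hdet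
  have hW1 : W.det * W.det = 1 := by simpa [det_mul, det_transpose] using congrArg det hW
  rw [sq, hdet]
  linear_combination (∏ i, singvals X i ^ 2) * hW1

lemma Matrix.mul_diagonal_mul_transpose_apply_self_le {Q : Matrix (Fin n) (Fin n) ℝ}
    (hQ : Q * Qᵀ = 1) {d : Fin n → ℝ} {c : ℝ} (hd : ∀ k, d k ≤ c) (i : Fin n) :
    (Q * diagonal d * Qᵀ) i i ≤ c := by
  have hrow : ∑ k, Q i k ^ 2 = 1 := by
    simpa [mul_apply, sq] using congrFun (congrFun hQ i) i
  calc (Q * diagonal d * Qᵀ) i i = ∑ k, d k * Q i k ^ 2 := by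
        simp only [mul_apply, diagonal_apply, transpose_apply, mul_ite, mul_zero,
          Finset.sum_ite_eq', Finset.mem_univ, if_true]
        exact Finset.sum_congr rfl fun k _ => by ring
    _ ≤ ∑ k, c * Q i k ^ 2 := by gcongr with k; exact hd k
    _ = c := by rw [← Finset.mul_sum, hrow, mul_one]

lemma abs_apply_le_singvals_zero [NeZero n] (X : Matrix (Fin n) (Fin t) ℝ) (i : Fin n)
    (j : Fin t) : |X i j| ≤ singvals X 0 := by
  obtain ⟨W, hW, hXX⟩ := exists_orthogonal_mul_transpose_eq_diagonal_singvals_sq X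
  refine abs_le_of_sq_le_sq ?_ (singvals_nonneg X 0)
  calc X i j ^ 2 ≤ ∑ k, X i k ^ 2 :=
        Finset.single_le_sum (fun k _ => sq_nonneg (X i k)) (Finset.mem_univ j)
    _ = (X * Xᵀ) i i := by simp [mul_apply, sq]
    _ ≤ singvals X 0 ^ 2 := by
        rw [hXX]
        refine mul_diagonal_mul_transpose_apply_self_le hW (fun k => ?_) i
        exact pow_le_pow_left₀ (singvals_nonneg X k) (singvals_antitone X (Fin.zero_le k)) 2

lemma singvals_eq_of_charpoly_eq {X Y : Matrix (Fin n) (Fin t) ℝ}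
    (h : (X * Xᵀ).charpoly = (Y * Yᵀ).charpoly) : singvals X = singvals Y := by
  have heig := ((isHermitian_mul_conjTranspose_self X).eigenvalues_eq_eigenvalues_iff
    (isHermitian_mul_conjTranspose_self Y)).2 (by simpa using h)
  unfold singvals
  rw [heig]

lemma singvals_mul_mul_transpose {U : Matrix (Fin n) (Fin n) ℝ} {V : Matrix (Fin t) (Fin t) ℝ}
    (hU : U * Uᵀ = 1) (hV : V * Vᵀ = 1) (X : Matrix (Fin n) (Fin t) ℝ) :
    singvals (U * X * Vᵀ) = singvals X := by
  apply singvals_eq_of_charpoly_eq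
  have hconj : U * X * Vᵀ * (U * X * Vᵀ)ᵀ = U * (X * Xᵀ * Uᵀ) := by
    simp only [transpose_mul, transpose_transpose, Matrix.mul_assoc]
    rw [← Matrix.mul_assoc Vᵀ V, mul_eq_one_comm.mp hV, Matrix.one_mul]
  rw [hconj, charpoly_mul_comm, Matrix.mul_assoc, mul_eq_one_comm.mp hU, Matrix.mul_one]

lemma singvals_diagonal {x : Fin n → ℝ} (hx : Antitone x) (hx0 : ∀ i, 0 ≤ x i) :
    ⇑(singvals (diagonal x)) = x := by
  set hA := isHermitian_mul_conjTranspose_self (diagonal x)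
  set g : Fin n → ℝ := fun j => √(hA.eigenvalues j)
  have hdiag : (diagonal x * (diagonal x)ᴴ).charpoly = (diagonal fun i => x i ^ 2).charpoly := by
    simp [sq]
  have hperm : (List.ofFn fun i => x i ^ 2).Perm (List.ofFn hA.eigenvalues) := by
    have h := hA.roots_charpoly_eq_eigenvalues
    rw [hdiag, charpoly_diagonal, Polynomial.roots_prod _ _
      (Finset.prod_ne_zero_iff.2 fun i _ => Polynomial.X_sub_C_ne_zero _)] at h
    simpa only [Polynomial.roots_X_sub_C, Multiset.bind_singleton, Fin.univ_val_map,
      Multiset.coe_eq_coe, RCLike.ofReal_real_eq_id, Function.id_comp] using h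
  have hperm' : (List.ofFn x).Perm (List.ofFn g) := by
    simpa [List.map_ofFn, Function.comp_def, Real.sqrt_sq (hx0 _), g] using hperm.map Real.sqrt
  refine List.ofFn_injective (List.Perm.eq_of_sortedGE (singvals_antitone _).sortedGE_ofFn
    hx.sortedGE_ofFn ?_)
  exact (Equiv.Perm.ofFn_comp_perm _ g).trans hperm'.symm

lemma norm_toEuc_mul_mul_transpose {U : Matrix (Fin n) (Fin n) ℝ} {V : Matrix (Fin t) (Fin t) ℝ}
    (hU : U * Uᵀ = 1) (hV : V * Vᵀ = 1) (X : Matrix (Fin n) (Fin t) ℝ) :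
    ‖toEuc (U * X * Vᵀ)‖ = ‖toEuc X‖ := by
  rw [← sq_eq_sq₀ (norm_nonneg _) (norm_nonneg _), norm_toEuc_sq_eq_sum_singvals_sq,
    norm_toEuc_sq_eq_sum_singvals_sq, singvals_mul_mul_transpose hU hV]

lemma dist_toEuc_mul_mul_transpose {U : Matrix (Fin n) (Fin n) ℝ} {V : Matrix (Fin t) (Fin t) ℝ}
    (hU : U * Uᵀ = 1) (hV : V * Vᵀ = 1) (A B : Matrix (Fin n) (Fin t) ℝ) :
    dist (toEuc (U * A * Vᵀ)) (toEuc (U * B * Vᵀ)) = dist (toEuc A) (toEuc B) := by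
  rw [dist_eq_norm, dist_eq_norm, ← toEuc_sub, ← toEuc_sub, ← Matrix.sub_mul, ← Matrix.mul_sub,
    norm_toEuc_mul_mul_transpose hU hV]

lemma dist_toEuc_diagonal_sq (x : Fin n → ℝ) (N : Matrix (Fin n) (Fin n) ℝ) :
    dist (toEuc (diagonal x)) (toEuc N) ^ 2
      = ∑ i, x i ^ 2 - 2 * ∑ i, x i * N i i + ‖toEuc N‖ ^ 2 := by
  rw [dist_eq_norm, norm_sub_sq_real, norm_toEuc_sq, inner_toEuc]
  simp [trace, diagonal_mul, sq]

lemma mem_matProj_of_forall_dist_le {A : Set (Matrix (Fin n) (Fin t) ℝ)}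
    {X Y : Matrix (Fin n) (Fin t) ℝ} (hX : X ∈ A)
    (h : ∀ Z ∈ A, dist (toEuc Y) (toEuc X) ≤ dist (toEuc Y) (toEuc Z)) : X ∈ matProj A Y := by
  refine ⟨hX, le_antisymm ?_ (Metric.infDist_le_dist_of_mem (Set.mem_image_of_mem _ hX))⟩
  rw [Metric.le_infDist (Set.image_nonempty.mpr ⟨X, hX⟩)]
  rintro _ ⟨Z, hZ, rfl⟩
  exact h Z hZ

-- For `v ∈ ker N`, `N = N R` with `R` the orthogonal projection onto `v⊥`, and `‖R‖² = n - 1`;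
-- conclude by Cauchy–Schwarz.
lemma Matrix.trace_sq_le_of_det_eq_zero {N : Matrix (Fin n) (Fin n) ℝ} (hN : N.det = 0) :
    N.trace ^ 2 ≤ (n - 1) * ‖toEuc N‖ ^ 2 := by
  obtain ⟨v, hv, hNv⟩ := exists_mulVec_eq_zero_iff.mpr hN
  set c := v ⬝ᵥ v
  have hc : c ≠ 0 := mt dotProduct_self_eq_zero.mp hv
  set R : Matrix (Fin n) (Fin n) ℝ := 1 - c⁻¹ • vecMulVec v v
  have hRt : Rᵀ = R := by
    simp [R, transpose_sub, transpose_smul, transpose_vecMulVec]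
  have hRR : R * R = R := by
    have hP : vecMulVec v v * vecMulVec v v = c • vecMulVec v v := by
      rw [vecMulVec_mul_vecMulVec, vecMulVec_smul]
    simp only [R, Matrix.sub_mul, Matrix.mul_sub, Matrix.mul_one, Matrix.one_mul,
      Matrix.smul_mul, Matrix.mul_smul, hP, smul_smul, inv_mul_cancel₀ hc, one_smul, sub_self,
      smul_zero, sub_zero]
  have hNR : N * Rᵀ = N := by
    rw [hRt, Matrix.mul_sub, Matrix.mul_one, Matrix.mul_smul, mul_vecMulVec, hNv]
    simp
  have hR : trace (R * Rᵀ) = n - 1 := by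
    rw [hRt, hRR]
    simp [R, trace_sub, c, inv_mul_cancel₀ hc]
  have hcs := real_inner_mul_inner_self_le (toEuc N) (toEuc R)
  rw [inner_toEuc, inner_toEuc, inner_toEuc, hNR, hR, ← norm_toEuc_sq] at hcs
  nlinarith [hcs]

end SingularValues

def essentialVariety : Set (Matrix (Fin 3) (Fin 3) ℝ) :=
  {X | singvals X 0 = singvals X 1 ∧ singvals X 2 = 0}

section EssentialVariety

lemma mul_mul_transpose_mem_essentialVariety_iff {U V X : Matrix (Fin 3) (Fin 3) ℝ}
    (hU : U * Uᵀ = 1) (hV : V * Vᵀ = 1) :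
    U * X * Vᵀ ∈ essentialVariety ↔ X ∈ essentialVariety := by
  simp only [essentialVariety, Set.mem_ofPred_eq, singvals_mul_mul_transpose hU hV]

lemma diagonal_mem_essentialVariety {s : ℝ} (hs : 0 ≤ s) :
    diagonal ![s, s, 0] ∈ essentialVariety := by
  have hanti : Antitone ![s, s, 0] := by
    intro i j hij
    fin_cases i <;> fin_cases j <;> simp_all [Fin.le_def]
  have hnonneg : ∀ i, 0 ≤ ![s, s, 0] i := by
    intro i
    fin_cases i <;> simp [hs]
  simp [essentialVariety, singvals_diagonal hanti hnonneg]

variable {N : Matrix (Fin 3) (Fin 3) ℝ}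

lemma norm_toEuc_sq_of_mem_essentialVariety (hN : N ∈ essentialVariety) :
    ‖toEuc N‖ ^ 2 = 2 * singvals N 0 ^ 2 := by
  rw [norm_toEuc_sq_eq_sum_singvals_sq, Fin.sum_univ_three, ← hN.1, hN.2]
  ring

lemma det_eq_zero_of_mem_essentialVariety (hN : N ∈ essentialVariety) : N.det = 0 := by
  rw [← sq_eq_zero_iff, det_sq_eq_prod_singvals_sq, Fin.prod_univ_three, hN.2]
  ring

lemma trace_le_of_mem_essentialVariety (hN : N ∈ essentialVariety) :
    N.trace ≤ 2 * singvals N 0 := by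
  have h := Matrix.trace_sq_le_of_det_eq_zero (det_eq_zero_of_mem_essentialVariety hN)
  rw [norm_toEuc_sq_of_mem_essentialVariety hN] at h
  refine (abs_le_of_sq_le_sq' ?_ (by positivity [singvals_nonneg N 0])).2
  norm_num at h
  linarith

lemma sum_mul_diag_le_of_mem_essentialVariety {σ : Fin 3 → ℝ} (hσ : Antitone σ)
    (hσ2 : 0 ≤ σ 2) (hN : N ∈ essentialVariety) :
    ∑ i, σ i * N i i ≤ singvals N 0 * (σ 0 + σ 1) := by
  have hN0 := (abs_le.mp (abs_apply_le_singvals_zero N 0 0)).2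
  have hN1 := (abs_le.mp (abs_apply_le_singvals_zero N 1 1)).2
  have htr := trace_le_of_mem_essentialVariety hN
  have h01 : σ 1 ≤ σ 0 := hσ (by decide)
  have h12 : σ 2 ≤ σ 1 := hσ (by decide)
  simp only [Matrix.trace, Fin.sum_univ_three, Matrix.diag_apply] at htr
  rw [Fin.sum_univ_three]
  -- Abel summation: `∑ σᵢ Nᵢᵢ = (σ₀ - σ₁) N₀₀ + (σ₁ - σ₂) (N₀₀ + N₁₁) + σ₂ tr N`.
  linarith [mul_le_mul_of_nonneg_left hN0 (sub_nonneg.2 h01),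
    mul_le_mul_of_nonneg_left (add_le_add hN0 hN1) (sub_nonneg.2 h12),
    mul_le_mul_of_nonneg_left htr hσ2]

lemma dist_diagonal_le_of_mem_essentialVariety {σ : Fin 3 → ℝ} (hσ : Antitone σ)
    (hσ2 : 0 ≤ σ 2) (hN : N ∈ essentialVariety) :
    dist (toEuc (diagonal σ)) (toEuc (diagonal ![(σ 0 + σ 1) / 2, (σ 0 + σ 1) / 2, 0]))
      ≤ dist (toEuc (diagonal σ)) (toEuc N) := by
  rw [← sq_le_sq₀ dist_nonneg dist_nonneg, dist_toEuc_diagonal_sq, dist_toEuc_diagonal_sq,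
    norm_toEuc_sq, norm_toEuc_sq_of_mem_essentialVariety hN]
  have := sum_mul_diag_le_of_mem_essentialVariety hσ hσ2 hN
  simp [Fin.sum_univ_three, Matrix.trace] at this ⊢
  nlinarith [sq_nonneg (singvals N 0 - (σ 0 + σ 1) / 2)]

end EssentialVariety

/-- for the essential variety
`E = {X ∈ ℝ^{3×3} : σ₁(X) = σ₂(X), σ₃(X) = 0}` and `Y = U Diag(σ₁,σ₂,σ₃) Vᵀ`, the matrix
`U Diag((σ₁+σ₂)/2, (σ₁+σ₂)/2, 0) Vᵀ` is a nearest element of `E` to `Y` in Frobenius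
norm. -/
theorem nearest_essential_matrix (Y U V : Matrix (Fin 3) (Fin 3) ℝ)
    (hU : U * Uᵀ = 1) (hV : V * Vᵀ = 1)
    (hY : Y = U * diagRect (fun i => singvals Y i) * Vᵀ) :
    U * diagRect
        ![(singvals Y 0 + singvals Y 1) / 2, (singvals Y 0 + singvals Y 1) / 2, 0] * Vᵀ
      ∈ matProj
          {X : Matrix (Fin 3) (Fin 3) ℝ | singvals X 0 = singvals X 1 ∧ singvals X 2 = 0}
          Y := by
  set σ := singvals Y
  have hs : 0 ≤ (σ 0 + σ 1) / 2 := by linarith [singvals_nonneg Y 0, singvals_nonneg Y 1]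
  have hUt : Uᵀ * Uᵀᵀ = 1 := by rw [transpose_transpose]; exact mul_eq_one_comm.mp hU
  have hVt : Vᵀ * Vᵀᵀ = 1 := by rw [transpose_transpose]; exact mul_eq_one_comm.mp hV
  rw [diagRect_self] at hY ⊢
  refine mem_matProj_of_forall_dist_le
    ((mul_mul_transpose_mem_essentialVariety_iff hU hV).2 (diagonal_mem_essentialVariety hs))
    fun X hX => ?_
  have hN : Uᵀ * X * V ∈ essentialVariety := by
    simpa using (mul_mul_transpose_mem_essentialVariety_iff hUt hVt).2 hX
  have hX' : X = U * (Uᵀ * X * V) * Vᵀ := by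
    simp only [← Matrix.mul_assoc, hU, Matrix.one_mul]
    rw [Matrix.mul_assoc, hV, Matrix.mul_one]
  rw [hY, hX', dist_toEuc_mul_mul_transpose hU hV, dist_toEuc_mul_mul_transpose hU hV]
  exact dist_diagonal_le_of_mem_essentialVariety (singvals_antitone Y) (singvals_nonneg Y 2) hN
end
end
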